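/- arXiv:math/0306355 — 5 statements merged into one kernel-verified Lean document; each statement's English description precedes it below -/
import Mathlib

section
/- Let p = n^{-α} with 0 < α < 1/2, let l be a positive integer with (1−2α)l > 9α, set m = ⌊(n−1)/(l+2)⌋, and fix a partition of the n coordinates into pairwise disjoint sets A, B, C_1, …, C_l each of size m. Then for any fixed vertex v of H_n, the probability that v is good tends to 1 as n → ∞. -/
open MeasureTheory Filter ENNReal

noncomputable section

/-- The hypercube graph `H_n` on vertex set `{0,1}^n`. -/
def hypercube (n : ℕ) : SimpleGraph (Fin n → Bool) where
  Adj x y := hammingDist x y = 1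
  symm := ⟨fun x y h => by rwa [hammingDist_comm]⟩
  loopless := ⟨fun x h => by simp [hammingDist_self] at h⟩

/-- The percolation subgraph of `G` given the configuration `ω`. -/
def percGraph {V : Type*} (G : SimpleGraph V) (ω : Sym2 V → Bool) : SimpleGraph V where
  Adj x y := G.Adj x y ∧ ω s(x, y) = true
  symm := ⟨fun x y h => by
    exact ⟨h.1.symm, by rw [Sym2.eq_swap]; exact h.2⟩⟩
  loopless := ⟨fun x h => G.loopless.irrefl x h.1⟩

/-- Bernoulli measure on `Bool` with parameter `p` (clamped to `[0,1]`). -/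
def bernoulliBool (p : ℝ) : Measure Bool :=
  (PMF.bernoulli (min (Real.toNNReal p) 1) (min_le_right _ _)).toMeasure

/-- Bernoulli bond percolation measure on configurations of edges of graphs on `{0,1}^n`. -/
def percMeasure (n : ℕ) (p : ℝ) : Measure (Sym2 (Fin n → Bool) → Bool) :=
  Measure.pi fun _ => bernoulliBool p

/-- Graph distance with value in `ℝ≥0∞` (`⊤` between distinct components). -/
def gdist {V : Type*} (G : SimpleGraph V) (x y : V) : ℝ≥0∞ := (G.edist x y : ℝ≥0∞)

/-- A vertex `u` is *good* (w.r.t. the coordinate set `A`, the parameter `m` and the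
percolation configuration `ω`) if at least `2m` vertices differing from `u` only in
`A`-coordinates are at percolation distance exactly `2` from `u`. -/
def IsGood (n : ℕ) (A : Finset (Fin n)) (m : ℕ) (ω : Sym2 (Fin n → Bool) → Bool)
    (u : Fin n → Bool) : Prop :=
  2 * m ≤ Set.ncard {w : Fin n → Bool |
    (∀ i, i ∉ A → w i = u i) ∧ (percGraph (hypercube n) ω).edist u w = 2}

open ProbabilityTheory

-- auxiliary material

abbrev Cfg (n : ℕ) := Sym2 (Fin n → Bool) → Bool

lemma measurableSet_all {n : ℕ} (s : Set (Cfg n)) : MeasurableSet s :=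
  (Set.to_countable s).measurableSet

lemma measurable_all {n : ℕ} {β : Type*} [MeasurableSpace β] (f : Cfg n → β) : Measurable f :=
  fun _ _ => measurableSet_all _

instance (p : ℝ) : IsProbabilityMeasure (bernoulliBool p) :=
  PMF.toMeasure.isProbabilityMeasure _

instance (n : ℕ) (p : ℝ) : IsProbabilityMeasure (percMeasure n p) := by
  unfold percMeasure; infer_instance

lemma bernoulliBool_true {p : ℝ} (hp1 : p ≤ 1) : bernoulliBool p {true} = ENNReal.ofReal p := by
  rw [bernoulliBool, PMF.toMeasure_apply_singleton _ _ (measurableSet_singleton _)]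
  simp [PMF.bernoulli_apply, min_eq_left (Real.toNNReal_le_one.2 hp1), ENNReal.ofReal]

lemma percMeasure_cyl {n : ℕ} {p : ℝ} (hp1 : p ≤ 1) (s : Finset (Sym2 (Fin n → Bool))) :
    percMeasure n p {ω : Cfg n | ∀ e ∈ s, ω e = true} = ENNReal.ofReal p ^ s.card := by
  classical
  have hset : {ω : Cfg n | ∀ e ∈ s, ω e = true}
      = Set.pi Set.univ (fun e => if e ∈ s then {true} else Set.univ) := by
    ext ω
    simp only [Set.mem_setOf_eq, Set.mem_pi, Set.mem_univ, forall_true_left]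
    constructor
    · intro h e
      by_cases he : e ∈ s <;> simp [he, h]
    · intro h e he
      have := h e
      simpa [he] using this
  rw [percMeasure, hset, Measure.pi_pi]
  have : ∀ e : Sym2 (Fin n → Bool),
      bernoulliBool p (if e ∈ s then ({true} : Set Bool) else Set.univ)
        = if e ∈ s then ENNReal.ofReal p else 1 := by
    intro e
    by_cases he : e ∈ s
    · simp [he, bernoulliBool_true hp1]
    · simp only [he, if_neg, if_false]
      exact measure_univ
  simp_rw [this]
  rw [Finset.prod_ite_mem, Finset.univ_inter, Finset.prod_const]

section Flip
variable {n : ℕ}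

/-- flip coordinate `i`. -/
def flp (i : Fin n) (x : Fin n → Bool) : Fin n → Bool := Function.update x i (!x i)

/-- flip coordinates `i` and `j` of `u`. -/
def vtx (u : Fin n → Bool) (i j : Fin n) : Fin n → Bool :=
  Function.update (Function.update u i (!u i)) j (!u j)

@[simp] lemma flp_self (i : Fin n) (x : Fin n → Bool) : flp i x i = !x i := by
  simp [flp]

lemma flp_other {i k : Fin n} (hk : k ≠ i) (x : Fin n → Bool) : flp i x k = x k := by
  simp [flp, Function.update_apply, hk]

lemma vtx_fst {u : Fin n → Bool} {i j : Fin n} (hij : i ≠ j) : vtx u i j i = !u i := by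
  simp [vtx, Function.update_apply, hij]

lemma vtx_snd (u : Fin n → Bool) (i j : Fin n) : vtx u i j j = !u j := by
  simp [vtx]

lemma vtx_other {u : Fin n → Bool} {i j k : Fin n} (hki : k ≠ i) (hkj : k ≠ j) :
    vtx u i j k = u k := by
  simp [vtx, Function.update_apply, hki, hkj]

lemma flp_ne (i : Fin n) (x : Fin n → Bool) : flp i x ≠ x := by
  intro h
  have := congrFun h i
  simp at this

lemma vtx_ne {u : Fin n → Bool} {i j : Fin n} (hij : i ≠ j) : vtx u i j ≠ u := by
  intro h
  have := congrFun h i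
  rw [vtx_fst hij] at this
  simp at this

lemma flp_inj {i i' : Fin n} {x : Fin n → Bool} (h : flp i x = flp i' x) : i = i' := by
  by_contra hne
  have := congrFun h i
  rw [flp_self, flp_other (Ne.symm (Ne.symm hne)) x] at this
  · simp at this

lemma hamming_flp (x : Fin n → Bool) (i : Fin n) : hammingDist x (flp i x) = 1 := by
  classical
  have : ({k | x k ≠ flp i x k} : Finset (Fin n)) = {i} := by
    ext k
    by_cases hk : k = i
    · subst hk; simp
    · simp [hk, flp_other hk]
  rw [hammingDist, this, Finset.card_singleton]

lemma hamming_vtx {u : Fin n → Bool} {i j : Fin n} (hij : i ≠ j) :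
    hammingDist u (vtx u i j) = 2 := by
  classical
  have : ({k | u k ≠ vtx u i j k} : Finset (Fin n)) = {i, j} := by
    ext k
    by_cases hki : k = i
    · subst hki; simp [vtx_fst hij]
    · by_cases hkj : k = j
      · subst hkj; simp [vtx_snd]
      · simp [hki, hkj, vtx_other hki hkj]
  rw [hammingDist, this, Finset.card_insert_of_notMem (by simp [hij]), Finset.card_singleton]

lemma vtx_ne_flp {u : Fin n → Bool} {i j i' : Fin n} (hij : i ≠ j) :
    vtx u i j ≠ flp i' u := by
  intro h
  have h2 := hamming_vtx (u := u) hij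
  rw [h, hamming_flp] at h2
  omega

lemma vtx_inj {u : Fin n → Bool} {a1 a2 : Finset (Fin n)} (hd : Disjoint a1 a2)
    {i i' j j' : Fin n} (hi : i ∈ a1) (hi' : i' ∈ a1) (hj : j ∈ a2) (hj' : j' ∈ a2)
    (h : vtx u i j = vtx u i' j') : i = i' ∧ j = j' := by
  have hij : i ≠ j := fun e => (Finset.disjoint_left.1 hd hi) (e ▸ hj)
  have hij' : i ≠ j' := fun e => (Finset.disjoint_left.1 hd hi) (e ▸ hj')
  have hi'j : i' ≠ j := fun e => (Finset.disjoint_left.1 hd hi') (e ▸ hj)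
  have hi'j' : i' ≠ j' := fun e => (Finset.disjoint_left.1 hd hi') (e ▸ hj')
  have hii' : i = i' := by
    by_contra hne
    have := congrFun h i
    rw [vtx_fst hij, vtx_other hne hij'] at this
    simp at this
  have hjj' : j = j' := by
    by_contra hne
    have := congrFun h j
    rw [vtx_snd, vtx_other (Ne.symm hi'j) hne] at this
    simp at this
  exact ⟨hii', hjj'⟩

end Flip

section Edges
variable {n : ℕ} (u : Fin n → Bool)

def e1 (i : Fin n) : Sym2 (Fin n → Bool) := s(u, flp i u)

def e2 (i j : Fin n) : Sym2 (Fin n → Bool) := s(flp i u, vtx u i j)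

variable {u}

lemma e1_ne_e2 {i i' j' : Fin n} (h : i' ≠ j') : e1 u i ≠ e2 u i' j' := by
  intro hh
  rw [e1, e2, Sym2.eq_iff] at hh
  rcases hh with ⟨h1, -⟩ | ⟨h1, -⟩
  · exact flp_ne i' u h1.symm
  · exact vtx_ne h h1.symm

lemma e1_inj {i i' : Fin n} (h : e1 u i = e1 u i') : i = i' := by
  rw [e1, e1, Sym2.eq_iff] at h
  rcases h with ⟨-, h2⟩ | ⟨h1, -⟩
  · exact flp_inj h2
  · exact absurd h1.symm (flp_ne i' u)

lemma e2_inj {a1 a2 : Finset (Fin n)} (hd : Disjoint a1 a2)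
    {i i' j j' : Fin n} (hi : i ∈ a1) (hi' : i' ∈ a1) (hj : j ∈ a2) (hj' : j' ∈ a2)
    (h : e2 u i j = e2 u i' j') : i = i' ∧ j = j' := by
  have hi'j' : i' ≠ j' := fun e => (Finset.disjoint_left.1 hd hi') (e ▸ hj')
  have hij : i ≠ j := fun e => (Finset.disjoint_left.1 hd hi) (e ▸ hj)
  rw [e2, e2, Sym2.eq_iff] at h
  rcases h with ⟨h1, h2⟩ | ⟨h1, h2⟩
  · exact vtx_inj hd hi hi' hj hj' h2
  · exact absurd h1.symm (vtx_ne_flp hi'j')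

variable (u) in
def edges (p : Fin n × Fin n) : Finset (Sym2 (Fin n → Bool)) := {e1 u p.1, e2 u p.1 p.2}

lemma card_edges {i j : Fin n} (hij : i ≠ j) : (edges u (i, j)).card = 2 := by
  rw [edges, Finset.card_insert_of_notMem (by simp [e1_ne_e2 hij]), Finset.card_singleton]

lemma three_le_card {i j j' : Fin n} (hij : i ≠ j) (hij' : i ≠ j') (hjj' : j ≠ j') :
    3 ≤ (edges u (i, j) ∪ edges u (i, j')).card := by
  have hsub : ({e1 u i, e2 u i j, e2 u i j'} : Finset (Sym2 (Fin n → Bool)))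
      ⊆ edges u (i, j) ∪ edges u (i, j') := by
    simp [edges, Finset.insert_subset_iff, Finset.mem_union]
  refine le_trans (le_of_eq ?_) (Finset.card_le_card hsub)
  have h22 : e2 u i j ≠ e2 u i j' := by
    intro h
    rw [e2, e2, Sym2.eq_iff] at h
    rcases h with ⟨-, h2⟩ | ⟨h1, -⟩
    · exact hjj' (vtx_inj (a1 := {i}) (a2 := {j, j'}) (by simp [Ne.symm hij, Ne.symm hij', hij, hij'])
        (by simp) (by simp) (by simp) (by simp) h2).2
    · exact vtx_ne_flp hij' h1.symm
  rw [Finset.card_insert_of_notMem (by simp [e1_ne_e2 hij, e1_ne_e2 hij']),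
    Finset.card_insert_of_notMem (by simp [h22]), Finset.card_singleton]

lemma four_le_card {a1 a2 : Finset (Fin n)} (hd : Disjoint a1 a2)
    {i i' j j' : Fin n} (hi : i ∈ a1) (hi' : i' ∈ a1) (hj : j ∈ a2) (hj' : j' ∈ a2)
    (hii' : i ≠ i') :
    4 ≤ (edges u (i, j) ∪ edges u (i', j')).card := by
  have hij : i ≠ j := fun e => (Finset.disjoint_left.1 hd hi) (e ▸ hj)
  have hi'j' : i' ≠ j' := fun e => (Finset.disjoint_left.1 hd hi') (e ▸ hj')
  have hsub : ({e1 u i, e1 u i', e2 u i j, e2 u i' j'} : Finset (Sym2 (Fin n → Bool)))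
      ⊆ edges u (i, j) ∪ edges u (i', j') := by
    simp [edges, Finset.insert_subset_iff, Finset.mem_union]
  refine le_trans (le_of_eq ?_) (Finset.card_le_card hsub)
  have h11 : e1 u i ≠ e1 u i' := fun h => hii' (e1_inj h)
  have h22 : e2 u i j ≠ e2 u i' j' := fun h => hii' (e2_inj hd hi hi' hj hj' h).1
  rw [Finset.card_insert_of_notMem
      (by simp [h11, e1_ne_e2 hij, e1_ne_e2 hi'j']),
    Finset.card_insert_of_notMem (by simp [e1_ne_e2 hij, e1_ne_e2 hi'j']),
    Finset.card_insert_of_notMem (by simp [h22]), Finset.card_singleton]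

end Edges

section Events
variable {n : ℕ}

def Ev (u : Fin n → Bool) (p : Fin n × Fin n) : Set (Cfg n) :=
  {ω | ∀ e ∈ edges u p, ω e = true}

lemma vtx_eq_flp_flp {u : Fin n → Bool} {i j : Fin n} (hij : i ≠ j) :
    vtx u i j = flp j (flp i u) := by
  rw [flp, flp_other (Ne.symm hij), vtx, flp]

lemma edist_eq_two_of_mem {u : Fin n → Bool} {i j : Fin n} (hij : i ≠ j) {ω : Cfg n}
    (hω : ω ∈ Ev u (i, j)) :
    (percGraph (hypercube n) ω).edist u (vtx u i j) = 2 := by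
  have h1 : ω (e1 u i) = true := hω _ (by simp [edges])
  have h2 : ω (e2 u i j) = true := hω _ (by simp [edges])
  have adj1 : (percGraph (hypercube n) ω).Adj u (flp i u) := ⟨hamming_flp u i, h1⟩
  have adj2 : (percGraph (hypercube n) ω).Adj (flp i u) (vtx u i j) := by
    refine ⟨?_, h2⟩
    show hammingDist (flp i u) (vtx u i j) = 1
    rw [vtx_eq_flp_flp hij, hamming_flp]
  have hle : (percGraph (hypercube n) ω).edist u (vtx u i j) ≤ 2 := by
    calc (percGraph (hypercube n) ω).edist u (vtx u i j)
        ≤ (percGraph (hypercube n) ω).edist u (flp i u)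
          + (percGraph (hypercube n) ω).edist (flp i u) (vtx u i j) :=
          SimpleGraph.edist_triangle
      _ ≤ 1 + 1 := add_le_add (le_of_eq (SimpleGraph.edist_eq_one_iff_adj.2 adj1))
          (le_of_eq (SimpleGraph.edist_eq_one_iff_adj.2 adj2))
      _ = 2 := by norm_num
  obtain ⟨k, hk, hk2⟩ := ENat.le_coe_iff.1 hle
  have h0 : k ≠ 0 := by
    intro h
    rw [h] at hk
    exact vtx_ne hij (SimpleGraph.edist_eq_zero_iff.1 (by exact_mod_cast hk)).symm
  have h1k : k ≠ 1 := by
    intro h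
    rw [h] at hk
    have hadj := SimpleGraph.edist_eq_one_iff_adj.1 (by exact_mod_cast hk)
    have hh : hammingDist u (vtx u i j) = 1 := hadj.1
    rw [hamming_vtx hij] at hh
    omega
  have hk2' : k ≤ 2 := by exact_mod_cast hk2
  have hk3 : k = 2 := by omega
  rw [hk, hk3]
  norm_cast

lemma good_of_card_filter {u : Fin n → Bool} {A a1 a2 : Finset (Fin n)}
    (ha1 : a1 ⊆ A) (ha2 : a2 ⊆ A) (hd : Disjoint a1 a2) (m : ℕ) (ω : Cfg n)
    [DecidablePred fun p : Fin n × Fin n => ω ∈ Ev u p]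
    (hcard : 2 * m ≤ ((a1 ×ˢ a2).filter fun p => ω ∈ Ev u p).card) :
    IsGood n A m ω u := by
  classical
  set Q := (a1 ×ˢ a2).filter fun p => ω ∈ Ev u p with hQ
  set T := {w : Fin n → Bool |
    (∀ i, i ∉ A → w i = u i) ∧ (percGraph (hypercube n) ω).edist u w = 2} with hT
  have hmemQ : ∀ p ∈ Q, p.1 ∈ a1 ∧ p.2 ∈ a2 ∧ ω ∈ Ev u p := by
    intro p hp
    rw [hQ, Finset.mem_filter, Finset.mem_product] at hp
    exact ⟨hp.1.1, hp.1.2, hp.2⟩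
  have himg : ↑(Q.image fun p => vtx u p.1 p.2) ⊆ T := by
    intro w hw
    simp only [Finset.coe_image, Set.mem_image, Finset.mem_coe] at hw
    obtain ⟨p, hp, rfl⟩ := hw
    obtain ⟨hp1, hp2, hpE⟩ := hmemQ p hp
    have hij : p.1 ≠ p.2 := fun e => (Finset.disjoint_left.1 hd hp1) (e ▸ hp2)
    constructor
    · intro k hk
      exact vtx_other (fun e => hk (ha1 (e ▸ hp1))) (fun e => hk (ha2 (e ▸ hp2)))
    · exact edist_eq_two_of_mem hij hpE
  have hinj : Set.InjOn (fun p : Fin n × Fin n => vtx u p.1 p.2) ↑Q := by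
    intro p hp q hq h
    obtain ⟨hp1, hp2, -⟩ := hmemQ p (Finset.mem_coe.1 hp)
    obtain ⟨hq1, hq2, -⟩ := hmemQ q (Finset.mem_coe.1 hq)
    obtain ⟨h1, h2⟩ := vtx_inj hd hp1 hq1 hp2 hq2 h
    exact Prod.ext h1 h2
  have hTfin : T.Finite := Set.toFinite T
  have : (Q.image fun p => vtx u p.1 p.2).card = Q.card :=
    Finset.card_image_of_injOn hinj
  have hle : Q.card ≤ T.ncard := by
    rw [← this, ← Set.ncard_coe_finset]
    exact Set.ncard_le_ncard himg hTfin
  rw [IsGood, ← hT]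
  omega

end Events

section Key
variable {n : ℕ}

lemma Ev_inter (u : Fin n → Bool) (p q : Fin n × Fin n) :
    Ev u p ∩ Ev u q = {ω : Cfg n | ∀ e ∈ edges u p ∪ edges u q, ω e = true} := by
  ext ω
  simp only [Ev, Set.mem_inter_iff, Set.mem_setOf_eq, Finset.mem_union]
  constructor
  · rintro ⟨h1, h2⟩ e (he | he)
    · exact h1 e he
    · exact h2 e he
  · intro h
    exact ⟨fun e he => h e (Or.inl he), fun e he => h e (Or.inr he)⟩

lemma key {A a1 a2 : Finset (Fin n)} (ha1 : a1 ⊆ A) (ha2 : a2 ⊆ A)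
    (hd : Disjoint a1 a2) (u : Fin n → Bool) (m : ℕ) {pr : ℝ} (hpr0 : 0 < pr) (hpr1 : pr ≤ 1)
    {c : ℝ} (hc : 0 < c)
    (hmc : 2 * m + c ≤ a1.card * a2.card * pr ^ 2) :
    percMeasure n pr {ω : Cfg n | IsGood n A m ω u}ᶜ ≤
      ENNReal.ofReal
        ((a1.card * a2.card * pr ^ 2 + a1.card * a2.card * a2.card * pr ^ 3) / c ^ 2) := by
  classical
  set μ := percMeasure n pr with hμ
  have : IsProbabilityMeasure μ := by rw [hμ]; infer_instance
  set P := a1 ×ˢ a2 with hP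
  set X : Cfg n → ℝ := fun ω => ∑ p ∈ P, (Ev u p).indicator (1 : Cfg n → ℝ) ω with hX
  have hne : ∀ p ∈ P, p.1 ≠ p.2 := by
    intro p hp
    rw [hP, Finset.mem_product] at hp
    exact fun e => (Finset.disjoint_left.1 hd hp.1) (e ▸ hp.2)
  have hmem1 : ∀ p ∈ P, p.1 ∈ a1 := fun p hp => (Finset.mem_product.1 hp).1
  have hmem2 : ∀ p ∈ P, p.2 ∈ a2 := fun p hp => (Finset.mem_product.1 hp).2
  have hint : ∀ p : Fin n × Fin n, Integrable ((Ev u p).indicator (1 : Cfg n → ℝ)) μ :=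
    fun p => (integrable_const (1 : ℝ)).indicator (measurableSet_all _)
  have hint2 : ∀ p q : Fin n × Fin n,
      Integrable ((Ev u p ∩ Ev u q).indicator (1 : Cfg n → ℝ)) μ :=
    fun p q => (integrable_const (1 : ℝ)).indicator (measurableSet_all _)
  -- expectation
  have hEv : ∀ p ∈ P, (μ (Ev u p)).toReal = pr ^ 2 := by
    intro p hp
    rw [hμ, Ev, percMeasure_cyl hpr1, ← Prod.mk.eta (p := p), card_edges (hne p hp),
      ENNReal.toReal_pow, ENNReal.toReal_ofReal hpr0.le]
  have hEX : μ[X] = P.card * pr ^ 2 := by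
    simp only [hX]
    rw [integral_finset_sum _ (fun p _ => hint p)]
    rw [Finset.sum_congr rfl
      (fun p hp => (integral_indicator_one (measurableSet_all _)).trans (hEv p hp))]
    rw [Finset.sum_const, nsmul_eq_mul]
  -- second moment
  have hEX2 : μ[X ^ 2] = ∑ p ∈ P, ∑ q ∈ P, (μ (Ev u p ∩ Ev u q)).toReal := by
    have hfun : (X ^ 2) = fun ω => ∑ p ∈ P, ∑ q ∈ P,
        ((Ev u p ∩ Ev u q).indicator (1 : Cfg n → ℝ)) ω := by
      funext ω
      simp only [Pi.pow_apply, hX, sq, Finset.sum_mul_sum]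
      exact Finset.sum_congr rfl fun p _ => Finset.sum_congr rfl fun q _ => by
        rw [Set.inter_indicator_one]; rfl
    rw [hfun, integral_finset_sum _ (fun p _ => integrable_finset_sum _ (fun q _ => hint2 p q))]
    refine Finset.sum_congr rfl fun p _ => ?_
    rw [integral_finset_sum _ (fun q _ => hint2 p q)]
    exact Finset.sum_congr rfl fun q _ => integral_indicator_one (measurableSet_all _)
  -- per-term bound
  have hterm : ∀ p ∈ P, ∀ q ∈ P, (μ (Ev u p ∩ Ev u q)).toReal ≤
      pr ^ 4 + (if p.1 = q.1 then pr ^ 3 else 0) + (if p = q then pr ^ 2 else 0) := by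
    intro p hp q hq
    have hcalc : (μ (Ev u p ∩ Ev u q)).toReal = pr ^ (edges u p ∪ edges u q).card := by
      rw [hμ, Ev_inter, percMeasure_cyl hpr1, ENNReal.toReal_pow, ENNReal.toReal_ofReal hpr0.le]
    have h3nn : (0:ℝ) ≤ pr ^ 3 := pow_nonneg hpr0.le 3
    have h4nn : (0:ℝ) ≤ pr ^ 4 := pow_nonneg hpr0.le 4
    by_cases hpq : p = q
    · subst hpq
      rw [hcalc, Finset.union_self, ← Prod.mk.eta (p := p), card_edges (hne p hp)]
      simp only [eq_self_iff_true, if_true]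
      linarith
    · by_cases h11 : p.1 = q.1
      · have h22 : p.2 ≠ q.2 := by
          intro h
          exact hpq (Prod.ext h11 h)
        have h3 : 3 ≤ (edges u p ∪ edges u q).card := by
          have := three_le_card (u := u) (hne p hp)
            (show p.1 ≠ q.2 from fun e => (Finset.disjoint_left.1 hd (hmem1 p hp)) (e ▸ hmem2 q hq))
            h22
          rw [← Prod.mk.eta (p := p), ← Prod.mk.eta (p := q), ← h11]
          exact this
        rw [hcalc]
        have : pr ^ (edges u p ∪ edges u q).card ≤ pr ^ 3 :=
          pow_le_pow_of_le_one hpr0.le hpr1 h3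
        simp only [if_pos h11, if_neg hpq]
        linarith
      · have h4 : 4 ≤ (edges u p ∪ edges u q).card := by
          have := four_le_card (u := u) hd (hmem1 p hp) (hmem1 q hq) (hmem2 p hp) (hmem2 q hq) h11
          rw [← Prod.mk.eta (p := p), ← Prod.mk.eta (p := q)]
          exact this
        rw [hcalc]
        have : pr ^ (edges u p ∪ edges u q).card ≤ pr ^ 4 :=
          pow_le_pow_of_le_one hpr0.le hpr1 h4
        simp only [if_neg h11, if_neg hpq]
        linarith
  -- the sum of the bound
  have hfiltercard : ∀ p ∈ P, (P.filter fun q => p.1 = q.1).card = a2.card := by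
    intro p hp
    have : (P.filter fun q => p.1 = q.1) = {p.1} ×ˢ a2 := by
      ext q
      simp only [hP, Finset.mem_filter, Finset.mem_product, Finset.mem_singleton]
      constructor
      · rintro ⟨⟨-, h2⟩, h3⟩
        exact ⟨h3.symm, h2⟩
      · rintro ⟨h1, h2⟩
        exact ⟨⟨h1 ▸ hmem1 p hp, h2⟩, h1.symm⟩
    rw [this, Finset.card_product, Finset.card_singleton, one_mul]
  have hinner : ∀ p ∈ P, ∑ q ∈ P, (pr ^ 4 + (if p.1 = q.1 then pr ^ 3 else 0)
        + (if p = q then pr ^ 2 else 0))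
      = (P.card : ℝ) * pr ^ 4 + a2.card * pr ^ 3 + pr ^ 2 := by
    intro p hp
    rw [Finset.sum_add_distrib, Finset.sum_add_distrib, Finset.sum_const, nsmul_eq_mul,
      ← Finset.sum_filter, Finset.sum_const, nsmul_eq_mul, hfiltercard p hp,
      Finset.sum_ite_eq P p (fun _ => pr ^ 2), if_pos hp]
  have hsum : ∑ p ∈ P, ∑ q ∈ P, (pr ^ 4 + (if p.1 = q.1 then pr ^ 3 else 0)
        + (if p = q then pr ^ 2 else 0))
      = (P.card : ℝ) ^ 2 * pr ^ 4 + P.card * a2.card * pr ^ 3 + P.card * pr ^ 2 := by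
    rw [Finset.sum_congr rfl hinner, Finset.sum_const, nsmul_eq_mul]
    ring
  have hEX2le : μ[X ^ 2] ≤ (P.card : ℝ) ^ 2 * pr ^ 4 + P.card * a2.card * pr ^ 3
      + P.card * pr ^ 2 := by
    rw [hEX2, ← hsum]
    exact Finset.sum_le_sum fun p hp => Finset.sum_le_sum fun q hq => hterm p hp q hq
  -- Memℒp
  have hXmem : MemLp X 2 μ := by
    refine MemLp.of_bound ((measurable_all X).aestronglyMeasurable) (P.card : ℝ)
      (Filter.Eventually.of_forall fun ω => ?_)
    have h0 : 0 ≤ X ω := Finset.sum_nonneg fun p _ => Set.indicator_nonneg (fun _ _ => zero_le_one) ω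
    rw [Real.norm_eq_abs, abs_of_nonneg h0]
    simp only [hX]
    calc ∑ p ∈ P, (Ev u p).indicator (1 : Cfg n → ℝ) ω
        ≤ ∑ p ∈ P, 1 := Finset.sum_le_sum fun p _ =>
          (by by_cases hω : ω ∈ Ev u p <;> simp [Set.indicator_apply, hω])
      _ = (P.card : ℝ) := by rw [Finset.sum_const, nsmul_eq_mul, mul_one]
  -- variance bound
  have hvar : ProbabilityTheory.variance X μ ≤ P.card * pr ^ 2 + P.card * a2.card * pr ^ 3 := by
    rw [ProbabilityTheory.variance_eq_sub hXmem, hEX]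
    have hexp : ((P.card : ℝ) * pr ^ 2) ^ 2 = (P.card : ℝ) ^ 2 * pr ^ 4 := by ring
    linarith
  -- inclusion in deviation event
  have hPcard : (P.card : ℝ) = a1.card * a2.card := by
    rw [hP, Finset.card_product]
    push_cast
    ring
  have hsub : {ω : Cfg n | IsGood n A m ω u}ᶜ ⊆ {ω | c ≤ |X ω - μ[X]|} := by
    intro ω hω
    simp only [Set.mem_compl_iff, Set.mem_setOf_eq] at hω ⊢
    have hXω : X ω < 2 * m := by
      by_contra hge
      push_neg at hge
      refine hω (good_of_card_filter ha1 ha2 hd m ω ?_)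
      have hXcard : X ω = ((P.filter fun p => ω ∈ Ev u p).card : ℝ) := by
        simp only [hX, Set.indicator_apply, Pi.one_apply]
        rw [Finset.sum_boole]
      rw [hXcard] at hge
      exact_mod_cast hge
    have h1 : c ≤ μ[X] - X ω := by
      rw [hEX, hPcard]
      linarith
    have h2 : μ[X] - X ω ≤ |X ω - μ[X]| := by
      rw [abs_sub_comm]
      exact le_abs_self _
    linarith
  calc μ {ω : Cfg n | IsGood n A m ω u}ᶜ
      ≤ μ {ω | c ≤ |X ω - μ[X]|} := measure_mono hsub
    _ ≤ ENNReal.ofReal (ProbabilityTheory.variance X μ / c ^ 2) :=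
        ProbabilityTheory.meas_ge_le_variance_div_sq hXmem hc
    _ ≤ ENNReal.ofReal
        ((a1.card * a2.card * pr ^ 2 + a1.card * a2.card * a2.card * pr ^ 3) / c ^ 2) := by
        apply ENNReal.ofReal_le_ofReal
        rw [hPcard] at hvar
        gcongr

end Key


set_option maxHeartbeats 2000000 in
theorem stmt4 (α : ℝ) (hα0 : 0 < α) (hα : α < 1 / 2) (l : ℕ) (hl : 0 < l)
    (hlα : 9 * α < (1 - 2 * α) * l)
    (A B : (n : ℕ) → Finset (Fin n)) (C : (n : ℕ) → Fin l → Finset (Fin n))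
    (hA : ∀ n, (A n).card = (n - 1) / (l + 2))
    (hB : ∀ n, (B n).card = (n - 1) / (l + 2))
    (hC : ∀ n k, (C n k).card = (n - 1) / (l + 2))
    (hAB : ∀ n, Disjoint (A n) (B n))
    (hAC : ∀ n k, Disjoint (A n) (C n k))
    (hBC : ∀ n k, Disjoint (B n) (C n k))
    (hCC : ∀ n, ∀ k k' : Fin l, k ≠ k' → Disjoint (C n k) (C n k'))
    (v : (n : ℕ) → Fin n → Bool) :
    Tendsto
      (fun n : ℕ =>
        percMeasure n ((n : ℝ) ^ (-α))
          {ω | IsGood n (A n) ((n - 1) / (l + 2)) ω (v n)})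
      atTop (nhds 1) := by
  classical
  set m : ℕ → ℕ := fun n => (n - 1) / (l + 2) with hm
  set pr : ℕ → ℝ := fun n => (n : ℝ) ^ (-α) with hpr
  -- choose the split of A n
  have hsplit : ∀ n : ℕ, ∃ a1 : Finset (Fin n), a1 ⊆ A n ∧ a1.card = m n / 2 := by
    intro n
    obtain ⟨t, ht, htc⟩ := Finset.exists_subset_card_eq
      (show m n / 2 ≤ (A n).card by rw [hA n]; exact Nat.div_le_self _ _)
    exact ⟨t, ht, htc⟩
  choose a1 ha1sub ha1card using hsplit
  set a2 : (n : ℕ) → Finset (Fin n) := fun n => A n \ a1 n with ha2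
  have ha2sub : ∀ n, a2 n ⊆ A n := fun n => Finset.sdiff_subset
  have ha2card : ∀ n, (a2 n).card = m n - m n / 2 := by
    intro n
    rw [ha2]
    rw [Finset.card_sdiff_of_subset (ha1sub n), hA n, ha1card n]
  have hdisj : ∀ n, Disjoint (a1 n) (a2 n) := fun n => Finset.disjoint_sdiff
  -- positivity of pr
  have hpr0 : ∀ n : ℕ, 1 ≤ n → 0 < pr n := by
    intro n hn
    exact Real.rpow_pos_of_pos (by exact_mod_cast hn) _
  have hpr1 : ∀ n : ℕ, 1 ≤ n → pr n ≤ 1 := by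
    intro n hn
    exact Real.rpow_le_one_of_one_le_of_nonpos (by exact_mod_cast hn) (by linarith)
  -- asymptotic facts
  have hT1 : Tendsto (fun n : ℕ => (n : ℝ) * pr n) atTop atTop := by
    have h1 : Tendsto (fun n : ℕ => (n : ℝ) ^ (1 - α)) atTop atTop :=
      (tendsto_rpow_atTop (by linarith)).comp tendsto_natCast_atTop_atTop
    refine h1.congr' ?_
    filter_upwards [eventually_ge_atTop 1] with n hn
    have hn0 : (0 : ℝ) < n := by exact_mod_cast hn
    rw [show (1 : ℝ) - α = 1 + -α by ring, Real.rpow_add hn0, Real.rpow_one]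
  have hT2 : Tendsto (fun n : ℕ => (n : ℝ) * pr n ^ 2) atTop atTop := by
    have h1 : Tendsto (fun n : ℕ => (n : ℝ) ^ (1 - 2 * α)) atTop atTop :=
      (tendsto_rpow_atTop (by linarith)).comp tendsto_natCast_atTop_atTop
    refine h1.congr' ?_
    filter_upwards [eventually_ge_atTop 1] with n hn
    have hn0 : (0 : ℝ) < n := by exact_mod_cast hn
    have : pr n ^ 2 = (n : ℝ) ^ (-(2 * α)) := by
      rw [hpr]
      rw [← Real.rpow_natCast ((n : ℝ) ^ (-α)) 2, ← Real.rpow_mul hn0.le]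
      norm_num
      ring_nf
    rw [this, show (1 : ℝ) - 2 * α = 1 + -(2 * α) by ring, Real.rpow_add hn0, Real.rpow_one]
  -- eventual combinatorial facts
  set D : ℕ := 4 * (l + 2) with hD
  have hnat : ∀ᶠ n : ℕ in atTop,
      1 ≤ m n / 2 ∧ n ≤ D * (m n / 2) ∧ n ≤ D * (m n - m n / 2) := by
    filter_upwards [eventually_ge_atTop (4 * (l + 2) + 2)] with n hn
    have hL : 0 < l + 2 := by omega
    set q := (n - 1) / (l + 2) with hq
    have hmq : m n = q := rfl
    have h1 : n - 1 < (q + 1) * (l + 2) := by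
      rw [hq]
      exact (Nat.div_lt_iff_lt_mul hL).1 (Nat.lt_succ_self _)
    have hq2 : 2 ≤ q := by
      rw [hq]
      refine (Nat.le_div_iff_mul_le hL).2 ?_
      omega
    have hm1 : 1 ≤ q / 2 := by omega
    have hqm1 : q + 1 ≤ 4 * (q / 2) := by omega
    have hkey : n ≤ 4 * (q / 2) * (l + 2) := by
      have h2 : (q + 1) * (l + 2) ≤ 4 * (q / 2) * (l + 2) := Nat.mul_le_mul_right _ hqm1
      omega
    have hm2 : q / 2 ≤ q - q / 2 := by omega
    refine ⟨by rw [hmq]; exact hm1, ?_, ?_⟩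
    · rw [hmq, hD]
      calc n ≤ 4 * (q / 2) * (l + 2) := hkey
        _ = 4 * (l + 2) * (q / 2) := by ring
    · rw [hmq, hD]
      calc n ≤ 4 * (q / 2) * (l + 2) := hkey
        _ ≤ 4 * (q - q / 2) * (l + 2) := by
            exact Nat.mul_le_mul_right _ (Nat.mul_le_mul_left _ hm2)
        _ = 4 * (l + 2) * (q - q / 2) := by ring
  -- main eventual bound on the bad event
  have hbad : ∀ᶠ n : ℕ in atTop,
      percMeasure n (pr n) {ω : Cfg n | IsGood n (A n) (m n) ω (v n)}ᶜ
        ≤ ENNReal.ofReal (8 / ((m n / 2 : ℕ) * pr n)) := by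
    filter_upwards [eventually_ge_atTop 1, hnat, hT1.eventually_ge_atTop (D : ℝ),
      hT2.eventually_ge_atTop (4 * (D : ℝ) ^ 2)] with n hn1 hnatn hE1 hE2
    obtain ⟨hm1, hn2, hn3⟩ := hnatn
    have hp0 := hpr0 n hn1
    have hp1 := hpr1 n hn1
    set m1 : ℝ := ((m n / 2 : ℕ) : ℝ) with hm1r
    set m2 : ℝ := ((m n - m n / 2 : ℕ) : ℝ) with hm2r
    have hDpos : (0 : ℝ) < D := by positivity
    have hm1pos : (1 : ℝ) ≤ m1 := by rw [hm1r]; exact_mod_cast hm1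
    have hnm1 : (n : ℝ) ≤ D * m1 := by rw [hm1r]; exact_mod_cast hn2
    have hnm2 : (n : ℝ) ≤ D * m2 := by rw [hm2r]; exact_mod_cast hn3
    have hm2pos : (0 : ℝ) < m2 := by
      nlinarith [Nat.one_le_iff_ne_zero.1 hn1, show (1:ℝ) ≤ (n:ℝ) by exact_mod_cast hn1]
    -- m2 * pr n ≥ 1
    have hCA : 1 ≤ m2 * pr n := by
      have : (D : ℝ) * 1 ≤ (D * m2) * pr n := by
        calc (D : ℝ) * 1 = (D : ℝ) := by ring
          _ ≤ (n : ℝ) * pr n := hE1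
          _ ≤ (D * m2) * pr n := by
              exact mul_le_mul_of_nonneg_right hnm2 hp0.le
      have h2 : (D : ℝ) * 1 ≤ (D : ℝ) * (m2 * pr n) := by
        calc (D : ℝ) * 1 ≤ (D * m2) * pr n := this
          _ = (D : ℝ) * (m2 * pr n) := by ring
      exact le_of_mul_le_mul_left h2 hDpos
    -- the quantity c
    set cq : ℝ := m1 * m2 * pr n ^ 2 / 2 with hcq
    have hcqpos : 0 < cq := by
      rw [hcq]; positivity
    -- 2 m + c ≤ m1 m2 pr²
    have hmn : (m n : ℝ) ≤ (n : ℝ) := by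
      exact_mod_cast Nat.le_trans (Nat.div_le_self _ _) (Nat.sub_le _ _)
    have hCB : 2 * (m n : ℝ) + cq ≤ m1 * m2 * pr n ^ 2 := by
      have hMge : (n : ℝ) * ((n : ℝ) * pr n ^ 2) ≤ (D : ℝ) ^ 2 * (m1 * m2 * pr n ^ 2) := by
        have := mul_le_mul hnm1 hnm2 (by positivity) (by positivity)
        nlinarith [sq_nonneg (pr n), hp0.le]
      have h4n : 4 * (n : ℝ) * (D : ℝ) ^ 2 ≤ (n : ℝ) * ((n : ℝ) * pr n ^ 2) := by
        have hn0 : (1 : ℝ) ≤ (n : ℝ) := by exact_mod_cast hn1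
        nlinarith [hE2]
      have : 4 * (m n : ℝ) ≤ m1 * m2 * pr n ^ 2 := by
        have hD2 : (0 : ℝ) < (D : ℝ) ^ 2 := by positivity
        nlinarith [hmn]
      rw [hcq]
      linarith
    -- apply the key lemma
    have hkey := key (ha1sub n) (ha2sub n) (hdisj n) (v n) (m n) hp0 hp1 hcqpos
      (by rw [ha1card n, ha2card n, ← hm1r, ← hm2r]; exact hCB)
    refine hkey.trans (ENNReal.ofReal_le_ofReal ?_)
    rw [ha1card n, ha2card n, ← hm1r, ← hm2r]
    -- (m1 m2 pr² + m1 m2 m2 pr³)/cq² ≤ 8/(m1 pr)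
    rw [div_le_div_iff₀ (by positivity) (by positivity)]
    have key_ineq : m1 * m1 * m2 * pr n ^ 3 ≤ m1 ^ 2 * m2 ^ 2 * pr n ^ 4 := by
      have h := mul_le_mul_of_nonneg_left hCA
        (show (0:ℝ) ≤ m1 * m1 * m2 * pr n ^ 3 by positivity)
      nlinarith [h]
    rw [hcq]
    nlinarith [key_ineq, hp0.le, hm1pos, hm2pos.le]
  -- conclude
  have hbad0 : Tendsto
      (fun n : ℕ => percMeasure n (pr n) {ω : Cfg n | IsGood n (A n) (m n) ω (v n)}ᶜ)
      atTop (nhds 0) := by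
    have hofreal : Tendsto (fun n : ℕ => ENNReal.ofReal (8 / ((m n / 2 : ℕ) * pr n)))
        atTop (nhds 0) := by
      have hM : Tendsto (fun n : ℕ => ((m n / 2 : ℕ) : ℝ) * pr n) atTop atTop := by
        refine tendsto_atTop_mono' atTop ?_ (hT1.atTop_div_const (show (0:ℝ) < D by positivity))
        filter_upwards [hnat, eventually_ge_atTop 1] with n hnatn hn1
        obtain ⟨-, hn2, -⟩ := hnatn
        have : (n : ℝ) ≤ D * ((m n / 2 : ℕ) : ℝ) := by exact_mod_cast hn2
        have hp0 := hpr0 n hn1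
        rw [div_le_iff₀ (show (0:ℝ) < D by positivity)]
        calc (n : ℝ) * pr n ≤ (D * ((m n / 2 : ℕ) : ℝ)) * pr n :=
              mul_le_mul_of_nonneg_right this hp0.le
          _ = ((m n / 2 : ℕ) : ℝ) * pr n * D := by ring
      have := (tendsto_const_nhds (x := (8:ℝ)) (f := atTop)).div_atTop hM
      have h2 := ENNReal.tendsto_ofReal this
      simpa using h2
    refine tendsto_of_tendsto_of_tendsto_of_le_of_le' tendsto_const_nhds hofreal
      (Eventually.of_forall fun n => zero_le (a := _)) hbad
  -- squeeze the good event to 1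
  have hgoodlow : ∀ n : ℕ,
      1 - percMeasure n (pr n) {ω : Cfg n | IsGood n (A n) (m n) ω (v n)}ᶜ
        ≤ percMeasure n (pr n) {ω : Cfg n | IsGood n (A n) (m n) ω (v n)} := by
    intro n
    rw [tsub_le_iff_right]
    rw [measure_add_measure_compl (measurableSet_all _)]
    rw [measure_univ]
  have hlowtendsto : Tendsto (fun n : ℕ =>
      1 - percMeasure n (pr n) {ω : Cfg n | IsGood n (A n) (m n) ω (v n)}ᶜ) atTop (nhds 1) := by
    have := ENNReal.Tendsto.sub (tendsto_const_nhds (x := (1 : ℝ≥0∞))) hbad0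
      (Or.inl ENNReal.one_ne_top)
    simpa using this
  exact tendsto_of_tendsto_of_tendsto_of_le_of_le hlowtendsto tendsto_const_nhds
    hgoodlow (fun n => prob_le_one)
end
end

section
/- Let p = n^{-α} with α > 1/2, fix 0 < β < γ < 2α − 1 and a positive integer δ. Then for all sufficiently large n, for any fixed vertex v of H_n, the probability that some vertex at H_n-distance at most δ from v lies on an open simple cycle of H_{n,p} whose length 2l satisfies 2n^β ≤ 2l ≤ 2n^γ is at most n^{δ + 1 + n^β(β + 1 − 2α)}. -/
open MeasureTheory Filter ENNReal

noncomputable section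

lemma binom_aux (a : ℕ) : ∀ k : ℕ, a ^ k + k * a ^ (k - 1) ≤ (a + 1) ^ k := by
  intro k
  induction k with
  | zero => simp
  | succ k ih =>
    cases k with
    | zero => simp [pow_succ]
    | succ k =>
      simp only [Nat.add_sub_cancel] at ih ⊢
      have expand : (a^(k+1) + (k+1) * a^k) * (a+1)
          = a^(k+1+1) + (k+1+1)*a^(k+1) + (k+1)*a^k := by ring
      have h2 : (a^(k+1) + (k+1) * a^k) * (a+1) ≤ (a+1)^(k+1) * (a+1) :=
        Nat.mul_le_mul_right _ ih
      have h3 : (a+1)^(k+1) * (a+1) = (a+1)^(k+1+1) := by ring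
      omega

lemma step_aux (l : ℕ) : (2*l+1) * l^l ≤ (l+1)^(l+1) := by
  cases l with
  | zero => simp
  | succ l =>
    have h2 : 2 * (l+1)^(l+1) ≤ (l+1+1)^(l+1) := by
      have hb := binom_aux (l+1) (l+1)
      simp only [Nat.add_sub_cancel] at hb
      have he : (l+1) * (l+1)^l = (l+1)^(l+1) := by rw [pow_succ]; ring
      omega
    calc (2*(l+1)+1) * (l+1)^(l+1) ≤ (2*(l+1)+2) * (l+1)^(l+1) := by
          apply Nat.mul_le_mul_right; omega
      _ = (l+1+1) * (2 * (l+1)^(l+1)) := by ring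
      _ ≤ (l+1+1) * (l+1+1)^(l+1) := Nat.mul_le_mul_left _ h2
      _ = (l+1+1)^(l+1+1) := by rw [← pow_succ']

lemma insert_erase' {α : Type*} [DecidableEq α] (a : α) :
    ∀ (T : List α), a ∈ T → List.insertIdx (T.erase a) (T.idxOf a) a = T := by
  intro T
  induction T with
  | nil => intro h; simp at h
  | cons b T ih =>
    intro h
    by_cases hb : b = a
    · subst hb
      simp [List.idxOf_cons_self, List.erase_cons_head, List.insertIdx_zero]
    · have ha : a ∈ T := by
        rcases List.mem_cons.mp h with h1 | h1
        · exact absurd h1.symm hb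
        · exact h1
      rw [List.erase_cons_tail (not_beq_of_ne hb),
        List.idxOf_cons_ne _ hb,
        List.insertIdx_succ_cons, ih ha]


lemma lists_card (n : ℕ) : ∀ (l : ℕ) (S : Finset (List (Fin n))),
    (∀ L ∈ S, L.length = 2 * l ∧ ∀ k, Even (L.count k)) → S.card ≤ (n * l) ^ l := by
  intro l
  induction l with
  | zero =>
    intro S hS
    simp only [pow_zero]
    refine Finset.card_le_one.mpr (fun a ha b hb => ?_)
    have ha' := (hS a ha).1
    have hb' := (hS b hb).1
    simp only [Nat.mul_zero, List.length_eq_zero_iff] at ha' hb'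
    rw [ha', hb']
  | succ l ih =>
    intro S hS
    rcases Nat.eq_zero_or_pos n with hn | hn
    · have : S = ∅ := by
        refine Finset.eq_empty_of_forall_notMem (fun L hL => ?_)
        have h1 := (hS L hL).1
        cases L with
        | nil => simp at h1
        | cons c T => subst hn; exact c.elim0
      simp [this]
    · haveI : Inhabited (Fin n) := ⟨⟨0, hn⟩⟩
      classical
      set S' := S.image (fun L => (L.tail.erase L.head!)) with hS'def
      have key : ∀ L ∈ S, L.head! ∈ L.tail ∧ L.head! :: L.tail = L ∧
          L.tail.length = 2*l+1 := by
        intro L hL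
        obtain ⟨hlen, hev⟩ := hS L hL
        have hne : L ≠ [] := by intro h; rw [h] at hlen; simp at hlen
        have hcons : L.head! :: L.tail = L := List.cons_head!_tail hne
        have hmemL : L.head! ∈ L := List.head!_mem_self hne
        have hcount : 2 ≤ L.count L.head! := by
          have h1 : 0 < L.count L.head! := List.count_pos_iff.mpr hmemL
          have h2 := hev L.head!
          rw [Nat.even_iff] at h2; omega
        have hct : L.count L.head! = L.tail.count L.head! + 1 := by
          have := List.count_cons_self (a := L.head!) (l := L.tail)
          rw [hcons] at this; exact this
        have hmemT : L.head! ∈ L.tail := by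
          rw [← List.count_pos_iff]; omega
        have hlt : L.tail.length = 2*l+1 := by
          have := congrArg List.length hcons
          simp only [List.length_cons] at this
          omega
        exact ⟨hmemT, hcons, hlt⟩
      have hS'prop : ∀ M ∈ S', M.length = 2*l ∧ ∀ k, Even (M.count k) := by
        intro M hM
        obtain ⟨L, hL, rfl⟩ := Finset.mem_image.mp hM
        obtain ⟨hmemT, hcons, hlt⟩ := key L hL
        obtain ⟨hlen, hev⟩ := hS L hL
        constructor
        · rw [List.length_erase_of_mem hmemT]; omega
        · intro k
          by_cases hk : k = L.head!
          · rw [hk, List.count_erase_self]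
            have hct : L.count L.head! = L.tail.count L.head! + 1 := by
              have := List.count_cons_self (a := L.head!) (l := L.tail)
              rw [hcons] at this; exact this
            have h2 := hev L.head!
            have h1 : 0 < L.tail.count L.head! := List.count_pos_iff.mpr hmemT
            rw [Nat.even_iff] at h2 ⊢
            omega
          · rw [List.count_erase_of_ne hk]
            have hct : L.count k = L.tail.count k := by
              have := List.count_cons_of_ne (Ne.symm hk) (l := L.tail)
              rw [hcons] at this; exact this
            rw [← hct]; exact hev k
      have hcard : S.card ≤ ((Finset.univ : Finset (Fin n)) ×ˢ
          (Finset.range (2*l+1)) ×ˢ S').card := by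
        apply Finset.card_le_card_of_injOn
          (fun L => (L.head!, L.tail.idxOf L.head!, L.tail.erase L.head!))
        · intro L hL
          obtain ⟨hmemT, hcons, hlt⟩ := key L hL
          simp only [Finset.mem_coe, Finset.mem_product, Finset.mem_univ, Finset.mem_range, true_and]
          constructor
          · rw [← hlt]; exact List.idxOf_lt_length_iff.mpr hmemT
          · exact Finset.mem_image_of_mem _ hL
        · intro L hL M hM hEq
          obtain ⟨hmemTL, hconsL, _⟩ := key L hL
          obtain ⟨hmemTM, hconsM, _⟩ := key M hM
          simp only [Prod.mk.injEq] at hEq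
          obtain ⟨h1, h2, h3⟩ := hEq
          have hT : L.tail = M.tail := by
            calc L.tail
                = List.insertIdx (L.tail.erase L.head!) (L.tail.idxOf L.head!) L.head! :=
                  (insert_erase' _ _ hmemTL).symm
              _ = List.insertIdx (M.tail.erase M.head!) (M.tail.idxOf M.head!) M.head! := by
                  rw [h2, h3, h1]
              _ = M.tail := insert_erase' _ _ hmemTM
          rw [← hconsL, ← hconsM, h1, hT]
      have hprodcard : ((Finset.univ : Finset (Fin n)) ×ˢ
          (Finset.range (2*l+1)) ×ˢ S').card = n * ((2*l+1) * S'.card) := by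
        simp [Finset.card_product]
      have hS'card : S'.card ≤ (n*l)^l := ih S' hS'prop
      calc S.card ≤ n * ((2*l+1) * S'.card) := by rw [← hprodcard]; exact hcard
        _ ≤ n * ((2*l+1) * ((n*l)^l)) := by
            apply Nat.mul_le_mul_left; apply Nat.mul_le_mul_left; exact hS'card
        _ = n * ((2*l+1) * l^l) * n^l := by rw [mul_pow]; ring
        _ ≤ n * ((l+1)^(l+1)) * n^l := by
            apply Nat.mul_le_mul_right; apply Nat.mul_le_mul_left; exact step_aux l
        _ = (n*(l+1))^(l+1) := by rw [mul_pow]; ring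

namespace Stmt7Aux

abbrev V (n : ℕ) : Type := Fin n → Bool

variable {n : ℕ}

lemma bernoulliBool_true (p : ℝ) : bernoulliBool p {true} = min (ENNReal.ofReal p) 1 := by
  rw [bernoulliBool, PMF.toMeasure_apply_singleton _ _ (measurableSet_singleton _)]
  show ((min p.toNNReal 1 : NNReal) : ℝ≥0∞) = _
  rw [ENNReal.coe_min, ENNReal.coe_one]
  rfl

instance (p : ℝ) : IsProbabilityMeasure (bernoulliBool p) :=
  PMF.toMeasure.isProbabilityMeasure _

/-- measure of a cylinder set -/
lemma measure_cylinder (p : ℝ) (S : Finset (Sym2 (V n))) :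
    percMeasure n p {ω | ∀ e ∈ S, ω e = true} = (min (ENNReal.ofReal p) 1) ^ S.card := by
  classical
  have hset : {ω : Sym2 (V n) → Bool | ∀ e ∈ S, ω e = true} =
      Set.pi Set.univ (fun e => if e ∈ S then {true} else Set.univ) := by
    ext ω
    simp only [Set.mem_setOf_eq, Set.mem_pi, Set.mem_univ, forall_true_left]
    constructor
    · intro h e
      by_cases he : e ∈ S
      · simp [he, h e he]
      · simp [he]
    · intro h e he
      have := h e
      simp [he] at this
      exact this
  rw [hset, percMeasure, Measure.pi_pi]
  have : ∀ e : Sym2 (V n), bernoulliBool p (if e ∈ S then ({true} : Set Bool) else Set.univ)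
      = if e ∈ S then (min (ENNReal.ofReal p) 1) else 1 := by
    intro e
    by_cases he : e ∈ S
    · simp [he, bernoulliBool_true]
    · rw [if_neg he, if_neg he]; exact measure_univ
  simp_rw [this]
  rw [Finset.prod_ite_mem, Finset.univ_inter, Finset.prod_const]



def flip1 (k : Fin n) (x : V n) : V n := Function.update x k (!x k)

def ptL (u : V n) (L : List (Fin n)) : V n := L.foldl (fun x c => flip1 c x) u

lemma ptL_apply (u : V n) (L : List (Fin n)) (k : Fin n) :
    ptL u L k = if Odd (L.count k) then !(u k) else u k := by
  induction L generalizing u with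
  | nil => simp [ptL]
  | cons c L ih =>
    show ptL (flip1 c u) L k = _
    rw [ih]
    by_cases hc : c = k
    · subst hc
      rw [List.count_cons_self]
      have hflip : flip1 c u c = !(u c) := Function.update_self _ _ _
      rcases Nat.even_or_odd (L.count c) with hpar | hpar
      · rw [Nat.even_iff] at hpar
        rw [if_neg (by rw [Nat.odd_iff]; omega), if_pos (by rw [Nat.odd_iff]; omega), hflip]
      · rw [Nat.odd_iff] at hpar
        rw [if_pos (by rw [Nat.odd_iff]; omega), if_neg (by rw [Nat.odd_iff]; omega), hflip,
          Bool.not_not]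
    · rw [List.count_cons_of_ne hc]
      have hflip : flip1 c u k = u k := Function.update_of_ne (fun h => hc h.symm) _ _
      rw [hflip]

lemma even_of_ptL_eq {u : V n} {L : List (Fin n)} (h : ptL u L = u) (k : Fin n) :
    Even (L.count k) := by
  have hk := congrFun h k
  rw [ptL_apply] at hk
  by_contra hodd
  rw [Nat.not_even_iff_odd] at hodd
  rw [if_pos hodd] at hk
  exact (Bool.not_ne_self (u k)) hk

def pt (u : V n) {m : ℕ} (f : Fin m → Fin n) (j : ℕ) : V n := ptL u ((List.ofFn f).take j)

lemma pt_zero (u : V n) {m : ℕ} (f : Fin m → Fin n) : pt u f 0 = u := rfl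

lemma pt_succ (u : V n) {m : ℕ} (f : Fin m → Fin n) {j : ℕ} (hj : j < m) :
    pt u f (j+1) = flip1 (f ⟨j, hj⟩) (pt u f j) := by
  unfold pt
  have hj' : j < (List.ofFn f).length := by rwa [List.length_ofFn]
  rw [List.take_succ, List.getElem?_eq_getElem hj', List.getElem_ofFn]
  rw [ptL, List.foldl_append]
  rfl

lemma pt_top (u : V n) {m : ℕ} (f : Fin m → Fin n) : pt u f m = ptL u (List.ofFn f) := by
  unfold pt
  rw [List.take_of_length_le (by rw [List.length_ofFn])]

def edgeF (u : V n) {m : ℕ} (f : Fin m → Fin n) (j : Fin m) : Sym2 (V n) :=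
  s(pt u f j, pt u f (j+1))

lemma exists_flip {x y : V n} (h : hammingDist x y = 1) : ∃ a, y = flip1 a x := by
  obtain ⟨a, ha⟩ := Finset.card_eq_one.mp h
  refine ⟨a, funext fun k => ?_⟩
  by_cases hk : k = a
  · subst hk
    have : k ∈ ({i | x i ≠ y i} : Finset (Fin n)) := by rw [ha]; exact Finset.mem_singleton_self _
    have hne : x k ≠ y k := by simpa using this
    have : flip1 k x k = !(x k) := Function.update_self _ _ _
    rw [this]
    revert hne; cases x k <;> cases y k <;> simp
  · have : k ∉ ({i | x i ≠ y i} : Finset (Fin n)) := by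
      rw [ha]; simpa using hk
    have heq : x k = y k := by simpa using this
    have : flip1 a x k = x k := Function.update_of_ne hk _ _
    rw [this, heq]

lemma walk_edges_get {V' : Type*} {G : SimpleGraph V'} :
    ∀ {x y : V'} (w : G.Walk x y) (j : ℕ) (hj : j < w.length),
      w.edges.get ⟨j, by rwa [SimpleGraph.Walk.length_edges]⟩
        = s(w.getVert j, w.getVert (j+1)) := by
  intro x y w
  induction w with
  | nil => intro j hj; simp at hj
  | @cons a b c h q ih =>
    intro j hj
    cases j with
    | zero => simp [SimpleGraph.Walk.edges_cons, SimpleGraph.Walk.getVert_zero,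
        SimpleGraph.Walk.getVert_cons_succ]
    | succ j =>
      have hj' : j < q.length := by simpa [SimpleGraph.Walk.length_cons] using hj
      have := ih j hj'
      simp only [SimpleGraph.Walk.edges_cons, SimpleGraph.Walk.getVert_cons_succ]
      show q.edges.get ⟨j, by simpa [SimpleGraph.Walk.length_edges] using hj'⟩ = _
      exact this

lemma hamming_le_walk_length :
    ∀ {x y : V n} (w : (hypercube n).Walk x y), hammingDist x y ≤ w.length := by
  intro x y w
  induction w with
  | nil => simp [hammingDist_self]
  | @cons a b c h q ih =>
    have h1 : hammingDist a b = 1 := h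
    calc hammingDist a c ≤ hammingDist a b + hammingDist b c := hammingDist_triangle _ _ _
      _ ≤ 1 + q.length := by rw [h1]; omega
      _ = (SimpleGraph.Walk.cons h q).length := by rw [SimpleGraph.Walk.length_cons]; omega

lemma ball_card (v : V n) (d : ℕ) (hn : 1 ≤ n) :
    ((Finset.univ : Finset (V n)).filter (fun u => hammingDist v u ≤ d)).card
      ≤ (d+1) * n^d := by
  classical
  set P := Finset.univ.powerset.filter (fun s : Finset (Fin n) => s.card ≤ d) with hP
  have h1 : ((Finset.univ : Finset (V n)).filter (fun u => hammingDist v u ≤ d)).card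
      ≤ P.card := by
    apply Finset.card_le_card_of_injOn (fun u => Finset.univ.filter (fun i => v i ≠ u i))
    · intro u hu
      simp only [Finset.coe_filter, Set.mem_setOf_eq, Finset.mem_univ, true_and] at hu
      simp only [hP, Finset.mem_coe, Finset.mem_filter, Finset.mem_powerset]
      exact ⟨Finset.subset_univ _, le_trans (le_of_eq rfl) hu⟩
    · intro u hu w hw hEq
      simp only at hEq
      funext k
      by_cases hk : v k ≠ u k
      · have : k ∈ Finset.univ.filter (fun i => v i ≠ u i) := by
          simp only [Finset.mem_filter, Finset.mem_univ, true_and]; exact hk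
        rw [hEq] at this
        have hk' : v k ≠ w k := by
          simpa only [Finset.mem_filter, Finset.mem_univ, true_and] using this
        revert hk hk'; cases v k <;> cases u k <;> cases w k <;> simp
      · have : k ∉ Finset.univ.filter (fun i => v i ≠ u i) := by
          simp only [Finset.mem_filter, Finset.mem_univ, true_and]; exact hk
        rw [hEq] at this
        have hk' : ¬ (v k ≠ w k) := by
          simpa only [Finset.mem_filter, Finset.mem_univ, true_and] using this
        push_neg at hk hk'
        rw [← hk, ← hk']
  have h2 : P ⊆ (Finset.range (d+1)).biUnion
      (fun k => Finset.powersetCard k (Finset.univ : Finset (Fin n))) := by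
    intro s hs
    simp only [hP, Finset.mem_filter, Finset.mem_powerset] at hs
    simp only [Finset.mem_biUnion, Finset.mem_range, Finset.mem_powersetCard]
    exact ⟨s.card, by omega, hs.1, rfl⟩
  have h3 : P.card ≤ ∑ k ∈ Finset.range (d+1), (Finset.powersetCard k
      (Finset.univ : Finset (Fin n))).card :=
    le_trans (Finset.card_le_card h2) (Finset.card_biUnion_le)
  have h4 : ∀ k ∈ Finset.range (d+1), (Finset.powersetCard k
      (Finset.univ : Finset (Fin n))).card ≤ n^d := by
    intro k hk
    rw [Finset.card_powersetCard, Finset.card_univ, Fintype.card_fin]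
    calc n.choose k ≤ n^k := Nat.choose_le_pow n k
      _ ≤ n^d := Nat.pow_le_pow_right hn (Nat.lt_succ_iff.mp (Finset.mem_range.mp hk))
  calc ((Finset.univ : Finset (V n)).filter (fun u => hammingDist v u ≤ d)).card
      ≤ P.card := h1
    _ ≤ ∑ k ∈ Finset.range (d+1), (Finset.powersetCard k
        (Finset.univ : Finset (Fin n))).card := h3
    _ ≤ ∑ _k ∈ Finset.range (d+1), n^d := Finset.sum_le_sum h4
    _ = (d+1) * n^d := by rw [Finset.sum_const, Finset.card_range, smul_eq_mul]




lemma exp_pow_aux (l : ℕ) (hl : 1 ≤ l) : ((l:ℝ)+1)^l ≤ Real.exp 1 * (l:ℝ)^l := by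
  have hl0 : (0:ℝ) < l := by exact_mod_cast hl
  have h1 : ((l:ℝ)+1)^l = (l:ℝ)^l * (1 + 1/(l:ℝ))^l := by
    rw [← mul_pow]; congr 1; field_simp
  have h2 : (1 + 1/(l:ℝ))^l ≤ (Real.exp (1/(l:ℝ)))^l := by
    apply pow_le_pow_left₀ (by positivity)
    have := Real.add_one_le_exp (1/(l:ℝ))
    linarith
  have h3 : (Real.exp (1/(l:ℝ)))^l = Real.exp 1 := by
    rw [← Real.exp_nat_mul]
    congr 1
    field_simp
  calc ((l:ℝ)+1)^l = (l:ℝ)^l * (1 + 1/(l:ℝ))^l := h1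
    _ ≤ (l:ℝ)^l * Real.exp 1 := by
        apply mul_le_mul_of_nonneg_left _ (by positivity)
        rw [← h3]; exact h2
    _ = Real.exp 1 * (l:ℝ)^l := by ring

lemma real_bound (α β γ : ℝ) (hβ : 0 < β) (δ n : ℕ)
    (hn1 : (1:ℝ) ≤ (n:ℝ))
    (hr : 2 * Real.exp 1 * (n:ℝ)^(γ+1-2*α) ≤ 1/2)
    (hlog : 1 ≤ (2*α-1-β) * Real.log n)
    (hbig : 2 * Real.exp 1 * ((δ:ℝ)+1) ≤ (n:ℝ)) :
    (((δ+1) * n^δ : ℕ) : ℝ) *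
      ∑ l ∈ Finset.Icc (⌈(n:ℝ)^β⌉₊) (⌊(n:ℝ)^γ⌋₊),
        (((n*l)^l : ℕ) : ℝ) * ((n:ℝ)^(-α))^(2*l)
      ≤ (n:ℝ)^((δ:ℝ)+1+(n:ℝ)^β*(β+1-2*α)) := by
  have npos : (0:ℝ) < n := lt_of_lt_of_le one_pos hn1
  set x : ℝ := (n:ℝ)^β with hxdef
  set ρ : ℝ := (n:ℝ)^(-(2*α)) with hρdef
  have hρpos : 0 < ρ := Real.rpow_pos_of_pos npos _
  set l0 : ℕ := ⌈x⌉₊ with hl0def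
  set l1 : ℕ := ⌊(n:ℝ)^γ⌋₊ with hl1def
  set F : ℕ → ℝ := fun l => ((n:ℝ)*(l:ℝ)*ρ)^l with hFdef
  have hx1 : 1 ≤ x := by
    rw [hxdef, show (1:ℝ) = (n:ℝ)^(0:ℝ) by rw [Real.rpow_zero]]
    exact Real.rpow_le_rpow_of_exponent_le hn1 hβ.le
  have hxpos : 0 < x := lt_of_lt_of_le one_pos hx1
  have hl0pos : 1 ≤ l0 := Nat.one_le_iff_ne_zero.mpr (by
    simp only [hl0def, ne_eq, Nat.ceil_eq_zero, not_le]; exact hxpos)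
  have hxl0 : x ≤ (l0:ℝ) := Nat.le_ceil x
  have hl0x : (l0:ℝ) ≤ x + 1 := (Nat.ceil_lt_add_one hxpos.le).le
  have hl1 : (l1:ℝ) ≤ (n:ℝ)^γ := Nat.floor_le (Real.rpow_nonneg npos.le _)
  have hFnonneg : ∀ l : ℕ, 0 ≤ F l := by
    intro l
    apply pow_nonneg
    positivity
  -- term identification
  have hterm : ∀ l : ℕ, (((n*l)^l : ℕ) : ℝ) * ((n:ℝ)^(-α))^(2*l) = F l := by
    intro l
    have h1 : ((n:ℝ)^(-α))^(2*l) = ρ^l := by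
      rw [← Real.rpow_natCast ((n:ℝ)^(-α)) (2*l), ← Real.rpow_natCast ρ l,
        hρdef, ← Real.rpow_mul npos.le, ← Real.rpow_mul npos.le]
      congr 1
      push_cast
      ring
    rw [h1, hFdef]
    push_cast
    rw [← mul_pow]
  -- ratio step
  have hratio : ∀ l : ℕ, 1 ≤ l → ((l:ℝ)+1) ≤ 2*(n:ℝ)^γ → F (l+1) ≤ (1/2) * F l := by
    intro l hl hub
    have hsplit : F (l+1) = ((n:ℝ)*((l:ℝ)+1)*ρ) * ((n:ℝ)*((l:ℝ)+1)*ρ)^l := by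
      rw [hFdef]
      push_cast
      rw [pow_succ]
      ring
    have hmid : ((n:ℝ)*((l:ℝ)+1)*ρ)^l = ((n:ℝ)*ρ)^l * ((l:ℝ)+1)^l := by
      rw [← mul_pow]; congr 1; ring
    have hexp : ((l:ℝ)+1)^l ≤ Real.exp 1 * (l:ℝ)^l := exp_pow_aux l hl
    have hFl : ((n:ℝ)*ρ)^l * (l:ℝ)^l = F l := by
      rw [hFdef, ← mul_pow]; congr 1; ring
    have hchain : F (l+1) ≤ ((n:ℝ)*((l:ℝ)+1)*ρ) * (Real.exp 1 * F l) := by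
      rw [hsplit, hmid]
      apply mul_le_mul_of_nonneg_left _ (by positivity)
      rw [← hFl]
      calc ((n:ℝ)*ρ)^l * ((l:ℝ)+1)^l ≤ ((n:ℝ)*ρ)^l * (Real.exp 1 * (l:ℝ)^l) := by
            apply mul_le_mul_of_nonneg_left hexp (by positivity)
        _ = Real.exp 1 * (((n:ℝ)*ρ)^l * (l:ℝ)^l) := by ring
    have hcoef : ((n:ℝ)*((l:ℝ)+1)*ρ) * Real.exp 1 ≤ 1/2 := by
      have h1 : (n:ℝ)*((l:ℝ)+1)*ρ ≤ (n:ℝ)*(2*(n:ℝ)^γ)*ρ := by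
        apply mul_le_mul_of_nonneg_right _ hρpos.le
        exact mul_le_mul_of_nonneg_left hub npos.le
      have h2 : (n:ℝ)*(2*(n:ℝ)^γ)*ρ * Real.exp 1 = 2 * Real.exp 1 * ((n:ℝ)^(γ+1-2*α)) := by
        rw [hρdef]
        rw [show γ+1-2*α = γ + 1 + (-(2*α)) by ring, Real.rpow_add npos, Real.rpow_add npos,
          Real.rpow_one]
        ring
      calc ((n:ℝ)*((l:ℝ)+1)*ρ) * Real.exp 1 ≤ (n:ℝ)*(2*(n:ℝ)^γ)*ρ * Real.exp 1 := by
            apply mul_le_mul_of_nonneg_right h1 (Real.exp_pos 1).le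
        _ = 2 * Real.exp 1 * ((n:ℝ)^(γ+1-2*α)) := h2
        _ ≤ 1/2 := hr
    calc F (l+1) ≤ ((n:ℝ)*((l:ℝ)+1)*ρ) * (Real.exp 1 * F l) := hchain
      _ = (((n:ℝ)*((l:ℝ)+1)*ρ) * Real.exp 1) * F l := by ring
      _ ≤ (1/2) * F l := mul_le_mul_of_nonneg_right hcoef (hFnonneg l)
  -- head bound
  have hhead : F l0 ≤ Real.exp 1 * (n:ℝ)^(x*(β+1-2*α)) := by
    have hbpos : 0 < (n:ℝ)*(l0:ℝ)*ρ := by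
      have : (0:ℝ) < l0 := by exact_mod_cast hl0pos
      positivity
    have hFpos : 0 < F l0 := pow_pos hbpos l0
    have hlogb : Real.log ((n:ℝ)*(l0:ℝ)*ρ) ≤ (β+1-2*α) * Real.log n + 1/x := by
      have hl0r : (0:ℝ) < l0 := by exact_mod_cast hl0pos
      rw [Real.log_mul (by positivity) hρpos.ne', Real.log_mul npos.ne' hl0r.ne']
      have hlρ : Real.log ρ = -(2*α) * Real.log n := Real.log_rpow npos _
      have hll0 : Real.log (l0:ℝ) ≤ β * Real.log n + 1/x := by
        have h1 : Real.log (l0:ℝ) ≤ Real.log (x+1) :=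
          Real.log_le_log hl0r hl0x
        have h2 : Real.log (x+1) = Real.log x + Real.log (1+1/x) := by
          rw [← Real.log_mul hxpos.ne' (by positivity)]
          congr 1
          field_simp
        have h3 : Real.log (1+1/x) ≤ 1/x := by
          have := Real.log_le_sub_one_of_pos (show (0:ℝ) < 1+1/x by positivity)
          linarith
        have h4 : Real.log x = β * Real.log n := Real.log_rpow npos _
        linarith
      linarith [hlρ, hll0]
    have hnlog : (β+1-2*α) * Real.log n + 1/x ≤ 0 := by
      have h1 : 1/x ≤ 1 := by
        rw [div_le_one hxpos]; exact hx1
      linarith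
    have hlogF : Real.log (F l0) ≤ x*(β+1-2*α) * Real.log n + 1 := by
      rw [hFdef]
      rw [Real.log_pow]
      calc (l0:ℝ) * Real.log ((n:ℝ)*(l0:ℝ)*ρ)
          ≤ x * Real.log ((n:ℝ)*(l0:ℝ)*ρ) := by
            apply mul_le_mul_of_nonpos_right hxl0
            linarith [hlogb, hnlog]
        _ ≤ x * ((β+1-2*α) * Real.log n + 1/x) := by
            apply mul_le_mul_of_nonneg_left hlogb hxpos.le
        _ = x*(β+1-2*α) * Real.log n + 1 := by
            field_simp
    calc F l0 = Real.exp (Real.log (F l0)) := (Real.exp_log hFpos).symm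
      _ ≤ Real.exp (x*(β+1-2*α) * Real.log n + 1) := Real.exp_le_exp.mpr hlogF
      _ = Real.exp 1 * (n:ℝ)^(x*(β+1-2*α)) := by
          rw [Real.exp_add, Real.rpow_def_of_pos npos]
          ring_nf
  -- geometric decay
  have hgeom : ∀ l ∈ Finset.Icc l0 l1, F l ≤ (1/2:ℝ)^(l-l0) * F l0 := by
    intro l hl
    rw [Finset.mem_Icc] at hl
    obtain ⟨hla, hlb⟩ := hl
    clear hterm
    induction l, hla using Nat.le_induction with
    | base => simp
    | succ l hla ih =>
      have hlb' : l ≤ l1 := by omega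
      have hub : ((l:ℝ)+1) ≤ 2*(n:ℝ)^γ := by
        have h1 : ((l+1:ℕ):ℝ) ≤ (l1:ℝ) := by exact_mod_cast hlb
        push_cast at h1
        nlinarith [hl1, Real.rpow_nonneg npos.le γ]
      have h1l : 1 ≤ l := le_trans hl0pos hla
      calc F (l+1) ≤ (1/2) * F l := hratio l h1l hub
        _ ≤ (1/2) * ((1/2:ℝ)^(l-l0) * F l0) := by
            apply mul_le_mul_of_nonneg_left (ih hlb') (by norm_num)
        _ = (1/2:ℝ)^(l+1-l0) * F l0 := by
            rw [show l+1-l0 = (l-l0)+1 by omega, pow_succ]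
            ring
  have hsum : ∑ l ∈ Finset.Icc l0 l1, F l ≤ 2 * F l0 := by
    calc ∑ l ∈ Finset.Icc l0 l1, F l ≤ ∑ l ∈ Finset.Icc l0 l1, (1/2:ℝ)^(l-l0) * F l0 :=
          Finset.sum_le_sum hgeom
      _ = (∑ l ∈ Finset.Icc l0 l1, (1/2:ℝ)^(l-l0)) * F l0 := by
          rw [Finset.sum_mul]
      _ ≤ 2 * F l0 := by
          apply mul_le_mul_of_nonneg_right _ (hFnonneg l0)
          rw [← Finset.Ico_add_one_right_eq_Icc, Finset.sum_Ico_eq_sum_range]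
          calc ∑ i ∈ Finset.range (l1+1-l0), (1/2:ℝ)^(l0+i-l0)
              = ∑ i ∈ Finset.range (l1+1-l0), (1/2:ℝ)^i := by
                apply Finset.sum_congr rfl
                intro i _
                congr 1
                omega
            _ ≤ 2 := sum_geometric_two_le _
  -- final assembly
  have hfinal : (((δ+1) * n^δ : ℕ) : ℝ) * (2 * F l0)
      ≤ (n:ℝ)^((δ:ℝ)+1+x*(β+1-2*α)) := by
    have hrw : (n:ℝ)^((δ:ℝ)+1+x*(β+1-2*α))
        = (n:ℝ)^(δ:ℝ) * (n:ℝ) * (n:ℝ)^(x*(β+1-2*α)) := by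
      rw [show (δ:ℝ)+1+x*(β+1-2*α) = (δ:ℝ) + 1 + (x*(β+1-2*α)) by ring,
        Real.rpow_add npos, Real.rpow_add npos, Real.rpow_one]
    rw [hrw]
    have hnd : (((δ+1) * n^δ : ℕ) : ℝ) = ((δ:ℝ)+1) * (n:ℝ)^(δ:ℝ) := by
      push_cast
      rw [Real.rpow_natCast]
    rw [hnd]
    calc ((δ:ℝ)+1) * (n:ℝ)^(δ:ℝ) * (2 * F l0)
        ≤ ((δ:ℝ)+1) * (n:ℝ)^(δ:ℝ) * (2 * (Real.exp 1 * (n:ℝ)^(x*(β+1-2*α)))) := by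
          apply mul_le_mul_of_nonneg_left _ (by positivity)
          apply mul_le_mul_of_nonneg_left hhead (by norm_num)
      _ = (2 * Real.exp 1 * ((δ:ℝ)+1)) * (n:ℝ)^(δ:ℝ) * (n:ℝ)^(x*(β+1-2*α)) := by ring
      _ ≤ (n:ℝ) * (n:ℝ)^(δ:ℝ) * (n:ℝ)^(x*(β+1-2*α)) := by
          apply mul_le_mul_of_nonneg_right _ (by positivity)
          apply mul_le_mul_of_nonneg_right hbig (by positivity)
      _ = (n:ℝ)^(δ:ℝ) * (n:ℝ) * (n:ℝ)^(x*(β+1-2*α)) := by ring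
  calc (((δ+1) * n^δ : ℕ) : ℝ) *
      ∑ l ∈ Finset.Icc l0 l1, (((n*l)^l : ℕ) : ℝ) * ((n:ℝ)^(-α))^(2*l)
      = (((δ+1) * n^δ : ℕ) : ℝ) * ∑ l ∈ Finset.Icc l0 l1, F l := by
        congr 1
        exact Finset.sum_congr rfl (fun l _ => hterm l)
    _ ≤ (((δ+1) * n^δ : ℕ) : ℝ) * (2 * F l0) := by
        apply mul_le_mul_of_nonneg_left hsum (by positivity)
    _ ≤ (n:ℝ)^((δ:ℝ)+1+x*(β+1-2*α)) := hfinal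

open Classical in
def Good (u : V n) (l : ℕ) : Finset (Fin (2*l) → Fin n) :=
  Finset.univ.filter (fun f => (∀ k, Even ((List.ofFn f).count k)) ∧
    Function.Injective (edgeF u f))

def Cyl (u : V n) {m : ℕ} (f : Fin m → Fin n) : Set (Sym2 (V n) → Bool) :=
  {ω | ∀ j : Fin m, ω (edgeF u f j) = true}

lemma good_card (u : V n) (l : ℕ) : (Good u l).card ≤ (n*l)^l := by
  classical
  have hcard : (Good u l).card = ((Good u l).image List.ofFn).card :=
    (Finset.card_image_of_injective _ List.ofFn_injective).symm
  rw [hcard]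
  apply lists_card n l
  intro L hL
  obtain ⟨f, hf, rfl⟩ := Finset.mem_image.mp hL
  have hf' := Finset.mem_filter.mp hf
  exact ⟨by rw [List.length_ofFn], hf'.2.1⟩

lemma measure_cyl (p : ℝ) (u : V n) {m : ℕ} (f : Fin m → Fin n)
    (hf : Function.Injective (edgeF u f)) :
    percMeasure n p (Cyl u f) ≤ ENNReal.ofReal p ^ m := by
  classical
  have hset : Cyl u f = {ω : Sym2 (V n) → Bool |
      ∀ e ∈ Finset.image (edgeF u f) Finset.univ, ω e = true} := by
    ext ω
    simp only [Cyl, Set.mem_setOf_eq, Finset.mem_image, Finset.mem_univ, true_and]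
    constructor
    · rintro h e ⟨j, rfl⟩
      exact h j
    · intro h j
      exact h _ ⟨j, rfl⟩
  rw [hset, measure_cylinder, Finset.card_image_of_injective _ hf, Finset.card_univ,
    Fintype.card_fin]
  exact pow_le_pow_left' (min_le_left _ _) m

end Stmt7Aux

open Stmt7Aux in
theorem stmt7 (α β γ : ℝ) (hα : 1 / 2 < α) (hβ : 0 < β) (hβγ : β < γ)
    (hγ : γ < 2 * α - 1) (δ : ℕ) (hδ : 0 < δ) :
    ∀ᶠ n : ℕ in atTop, ∀ v : Fin n → Bool,
      percMeasure n ((n : ℝ) ^ (-α))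
        {ω | ∃ u : Fin n → Bool, (hypercube n).edist v u ≤ (δ : ℕ∞) ∧
          ∃ c : (percGraph (hypercube n) ω).Walk u u, c.IsCycle ∧
            ∃ l : ℕ, c.length = 2 * l ∧ (n : ℝ) ^ β ≤ (l : ℝ) ∧ (l : ℝ) ≤ (n : ℝ) ^ γ} ≤
      ENNReal.ofReal ((n : ℝ) ^ ((δ : ℝ) + 1 + (n : ℝ) ^ β * (β + 1 - 2 * α))) := by
  classical
  have h2αβ : 0 < 2*α - 1 - β := by linarith
  have h2αγ : 0 < 2*α - 1 - γ := by linarith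
  have ev1 : ∀ᶠ n : ℕ in atTop, (1:ℝ) ≤ (n:ℝ) :=
    tendsto_natCast_atTop_atTop.eventually_ge_atTop 1
  have ev2 : ∀ᶠ n : ℕ in atTop, 2 * Real.exp 1 * (n:ℝ)^(γ+1-2*α) ≤ 1/2 := by
    have htend : Tendsto (fun n : ℕ => ((n:ℝ))^(γ+1-2*α)) atTop (nhds 0) := by
      have h := (tendsto_rpow_neg_atTop h2αγ).comp
        (tendsto_natCast_atTop_atTop (R := ℝ))
      have heq : (fun n : ℕ => ((n:ℝ))^(-(2*α-1-γ))) = fun n : ℕ => ((n:ℝ))^(γ+1-2*α) := by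
        funext n; congr 1; ring
      rw [← heq]
      exact h
    have hpos : (0:ℝ) < (1/2) / (2 * Real.exp 1) := by positivity
    filter_upwards [htend.eventually_lt_const hpos] with n hn
    have he : (0:ℝ) < 2 * Real.exp 1 := by positivity
    calc 2 * Real.exp 1 * (n:ℝ)^(γ+1-2*α)
        ≤ 2 * Real.exp 1 * ((1/2) / (2 * Real.exp 1)) :=
          mul_le_mul_of_nonneg_left hn.le he.le
      _ = 1/2 := by field_simp
  have ev3 : ∀ᶠ n : ℕ in atTop, 1 ≤ (2*α-1-β) * Real.log n := by
    have htend : Tendsto (fun n : ℕ => Real.log n) atTop atTop :=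
      Real.tendsto_log_atTop.comp (tendsto_natCast_atTop_atTop (R := ℝ))
    filter_upwards [htend.eventually_ge_atTop (1/(2*α-1-β))] with n hn
    rw [div_le_iff₀ h2αβ] at hn
    linarith [hn]
  have ev4 : ∀ᶠ n : ℕ in atTop, 2 * Real.exp 1 * ((δ:ℝ)+1) ≤ (n:ℝ) :=
    tendsto_natCast_atTop_atTop.eventually_ge_atTop _
  have ev5 : ∀ᶠ n : ℕ in atTop, 1 ≤ n := eventually_ge_atTop 1
  filter_upwards [ev1, ev2, ev3, ev4, ev5] with n hn1 hr hlog hbig hn1'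
  intro v
  set p : ℝ := (n:ℝ)^(-α) with hpdef
  have hp0 : 0 ≤ p := Real.rpow_nonneg (Nat.cast_nonneg n) _
  set l0 : ℕ := ⌈(n:ℝ)^β⌉₊ with hl0def
  set l1 : ℕ := ⌊(n:ℝ)^γ⌋₊ with hl1def
  set Ball : Finset (Fin n → Bool) :=
    Finset.univ.filter (fun u => hammingDist v u ≤ δ) with hBalldef
  have hsub : {ω : Sym2 (Fin n → Bool) → Bool |
      ∃ u : Fin n → Bool, (hypercube n).edist v u ≤ (δ : ℕ∞) ∧
        ∃ c : (percGraph (hypercube n) ω).Walk u u, c.IsCycle ∧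
          ∃ l : ℕ, c.length = 2 * l ∧ (n : ℝ) ^ β ≤ (l : ℝ) ∧ (l : ℝ) ≤ (n : ℝ) ^ γ}
      ⊆ ⋃ u ∈ Ball, ⋃ l ∈ Finset.Icc l0 l1, ⋃ f ∈ Good u l, Cyl u f := by
    rintro ω ⟨u, hud, c, hcyc, l, hlen, hlb, hub⟩
    have hedist : (hypercube n).edist v u ≠ ⊤ :=
      ne_top_of_le_ne_top (by simp) hud
    obtain ⟨w, hw⟩ := SimpleGraph.exists_walk_of_edist_ne_top hedist
    have hwlen : (w.length : ℕ∞) ≤ (δ : ℕ∞) := by rw [hw]; exact hud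
    have hwlen' : w.length ≤ δ := by exact_mod_cast hwlen
    have huBall : u ∈ Ball := by
      rw [hBalldef, Finset.mem_filter]
      exact ⟨Finset.mem_univ _, le_trans (hamming_le_walk_length w) hwlen'⟩
    have hlIcc : l ∈ Finset.Icc l0 l1 :=
      Finset.mem_Icc.mpr ⟨Nat.ceil_le.mpr hlb, Nat.le_floor hub⟩
    have hadj : ∀ j : Fin (2*l),
        (percGraph (hypercube n) ω).Adj (c.getVert j) (c.getVert (j+1)) := by
      intro j
      apply SimpleGraph.Walk.adj_getVert_succ
      rw [hlen]; exact j.2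
    have hex : ∀ j : Fin (2*l), ∃ a, c.getVert (j+1) = flip1 a (c.getVert j) := by
      intro j
      exact exists_flip ((hadj j).1)
    choose g hg using hex
    have hpt : ∀ j, j ≤ 2*l → pt u g j = c.getVert j := by
      intro j
      induction j with
      | zero => intro _; rw [pt_zero, SimpleGraph.Walk.getVert_zero]
      | succ j ih =>
        intro hj
        have hj' : j < 2*l := hj
        rw [pt_succ u g hj', ih hj'.le]
        exact (hg ⟨j, hj'⟩).symm
    have hedges : ∀ j : Fin (2*l), edgeF u g j = s(c.getVert j, c.getVert (j+1)) := by
      intro j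
      show s(pt u g j, pt u g (j+1)) = _
      rw [hpt j (le_of_lt j.2), hpt ((j:ℕ)+1) j.2]
    have hmem : ω ∈ Cyl u g := by
      intro j
      rw [hedges j]
      exact (hadj j).2
    have hgGood : g ∈ Good u l := by
      rw [Good, Finset.mem_filter]
      refine ⟨Finset.mem_univ _, ?_, ?_⟩
      · intro k
        apply even_of_ptL_eq (u := u)
        rw [← pt_top, hpt (2*l) le_rfl, ← hlen, SimpleGraph.Walk.getVert_length]
      · have hnodup : c.edges.Nodup := hcyc.isCircuit.isTrail.edges_nodup
        have hinj := List.nodup_iff_injective_get.mp hnodup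
        intro j j' hjj
        have hlenE : ∀ jj : Fin (2*l), (jj:ℕ) < c.edges.length := by
          intro jj
          rw [SimpleGraph.Walk.length_edges, hlen]; exact jj.2
        have e1 : ∀ jj : Fin (2*l), edgeF u g jj = c.edges.get ⟨jj, hlenE jj⟩ := by
          intro jj
          rw [hedges jj]
          have := walk_edges_get c (jj:ℕ) (by rw [hlen]; exact jj.2)
          exact this.symm
        rw [e1 j, e1 j'] at hjj
        have := hinj hjj
        rw [Fin.mk.injEq] at this
        exact Fin.ext this
    exact Set.mem_iUnion₂.mpr ⟨u, huBall,
      Set.mem_iUnion₂.mpr ⟨l, hlIcc, Set.mem_iUnion₂.mpr ⟨g, hgGood, hmem⟩⟩⟩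
  refine le_trans (measure_mono hsub) ?_
  have step1 : percMeasure n p (⋃ u ∈ Ball, ⋃ l ∈ Finset.Icc l0 l1, ⋃ f ∈ Good u l, Cyl u f)
      ≤ ∑ u ∈ Ball, ∑ l ∈ Finset.Icc l0 l1,
          ((((n*l)^l : ℕ)) : ℝ≥0∞) * ENNReal.ofReal (p^(2*l)) := by
    refine le_trans (measure_biUnion_finset_le _ _) (Finset.sum_le_sum fun u _ => ?_)
    refine le_trans (measure_biUnion_finset_le _ _) (Finset.sum_le_sum fun l _ => ?_)
    refine le_trans (measure_biUnion_finset_le _ _) ?_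
    have hterm : ∀ f ∈ Good u l, percMeasure n p (Cyl u f)
        ≤ ENNReal.ofReal (p^(2*l)) := by
      intro f hf
      have hf' := (Finset.mem_filter.mp hf).2.2
      calc percMeasure n p (Cyl u f) ≤ ENNReal.ofReal p ^ (2*l) := measure_cyl p u f hf'
        _ = ENNReal.ofReal (p^(2*l)) := (ENNReal.ofReal_pow hp0 _).symm
    calc ∑ f ∈ Good u l, percMeasure n p (Cyl u f)
        ≤ (Good u l).card • ENNReal.ofReal (p^(2*l)) :=
          Finset.sum_le_card_nsmul _ _ _ hterm
      _ = ((Good u l).card : ℝ≥0∞) * ENNReal.ofReal (p^(2*l)) := by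
          rw [nsmul_eq_mul]
      _ ≤ ((((n*l)^l : ℕ)) : ℝ≥0∞) * ENNReal.ofReal (p^(2*l)) := by
          apply mul_le_mul_left
          exact_mod_cast Nat.cast_le.mpr (good_card u l)
  refine le_trans step1 ?_
  have step2 : ∀ l : ℕ, ((((n*l)^l : ℕ)) : ℝ≥0∞) * ENNReal.ofReal (p^(2*l))
      = ENNReal.ofReal ((((n*l)^l : ℕ) : ℝ) * p^(2*l)) := by
    intro l
    rw [ENNReal.ofReal_mul (by positivity), ENNReal.ofReal_natCast]
  have step3 : ∑ u ∈ Ball, ∑ l ∈ Finset.Icc l0 l1,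
        ((((n*l)^l : ℕ)) : ℝ≥0∞) * ENNReal.ofReal (p^(2*l))
      = (Ball.card : ℝ≥0∞) * ENNReal.ofReal
          (∑ l ∈ Finset.Icc l0 l1, (((n*l)^l : ℕ) : ℝ) * p^(2*l)) := by
    rw [Finset.sum_const, nsmul_eq_mul]
    congr 1
    rw [ENNReal.ofReal_sum_of_nonneg (fun l _ => by positivity)]
    exact Finset.sum_congr rfl (fun l _ => step2 l)
  rw [step3]
  have hsum_nonneg : 0 ≤ ∑ l ∈ Finset.Icc l0 l1, (((n*l)^l : ℕ) : ℝ) * p^(2*l) :=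
    Finset.sum_nonneg (fun l _ => by positivity)
  calc (Ball.card : ℝ≥0∞) * ENNReal.ofReal
        (∑ l ∈ Finset.Icc l0 l1, (((n*l)^l : ℕ) : ℝ) * p^(2*l))
      = ENNReal.ofReal ((Ball.card : ℝ) *
          ∑ l ∈ Finset.Icc l0 l1, (((n*l)^l : ℕ) : ℝ) * p^(2*l)) := by
        rw [ENNReal.ofReal_mul (by positivity), ENNReal.ofReal_natCast]
    _ ≤ ENNReal.ofReal ((((δ+1) * n^δ : ℕ) : ℝ) *
          ∑ l ∈ Finset.Icc l0 l1, (((n*l)^l : ℕ) : ℝ) * p^(2*l)) := by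
        apply ENNReal.ofReal_le_ofReal
        apply mul_le_mul_of_nonneg_right _ hsum_nonneg
        exact_mod_cast Nat.cast_le.mpr (ball_card v δ hn1')
    _ ≤ ENNReal.ofReal ((n:ℝ)^((δ:ℝ) + 1 + (n:ℝ)^β * (β + 1 - 2*α))) := by
        apply ENNReal.ofReal_le_ofReal
        exact real_bound α β γ hβ δ n hn1 hr hlog hbig
end
end

section
/- For every vertex v of H_n and every integer l ≥ 2, the number of simple cycles of length 2l in H_n passing through v is at most (2l−1)!! · n^l, where (2l−1)!! = 1·3·5···(2l−1) is the number of partitions of a 2l-element set into pairs. -/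
noncomputable section

namespace Stmt8Aux

variable {n : ℕ}

lemma adj_iff {x y : Fin n → Bool} (h : (hypercube n).Adj x y) :
    ∃ i : Fin n, ∀ j, x j ≠ y j ↔ j = i := by
  have h' : ({i | x i ≠ y i} : Finset (Fin n)).card = 1 := by
    have h2 : hammingDist x y = 1 := h; unfold hammingDist at h2; convert h2
  obtain ⟨i, hi⟩ := Finset.card_eq_one.mp h'
  refine ⟨i, fun j => ?_⟩
  have : j ∈ ({i | x i ≠ y i} : Finset (Fin n)) ↔ x j ≠ y j := by simp
  rw [← this, hi, Finset.mem_singleton]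

/-- The coordinate at which two adjacent vertices differ. -/
def coordOf {x y : Fin n → Bool} (h : (hypercube n).Adj x y) : Fin n :=
  (adj_iff h).choose

lemma coordOf_spec {x y : Fin n → Bool} (h : (hypercube n).Adj x y) (j : Fin n) :
    x j ≠ y j ↔ j = coordOf h := (adj_iff h).choose_spec j

lemma snd_eq {x y : Fin n → Bool} (h : (hypercube n).Adj x y) :
    y = Function.update x (coordOf h) (!(x (coordOf h))) := by
  funext j
  rcases eq_or_ne j (coordOf h) with hj | hj
  · rw [hj, Function.update_self]
    have h1 : x (coordOf h) ≠ y (coordOf h) := (coordOf_spec h _).mpr rfl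
    cases hx : x (coordOf h) <;> cases hy : y (coordOf h) <;> simp_all
  · have h1 : x j = y j := by
      by_contra hc; exact hj ((coordOf_spec h j).mp hc)
    rw [Function.update_of_ne hj, h1]

/-- The list of coordinates flipped along a walk. -/
def coords : ∀ {x y : Fin n → Bool}, (hypercube n).Walk x y → List (Fin n)
  | _, _, .nil => []
  | _, _, .cons h p => coordOf h :: coords p

lemma coords_length : ∀ {x y : Fin n → Bool} (p : (hypercube n).Walk x y),
    (coords p).length = p.length
  | _, _, .nil => rfl
  | _, _, .cons h p => by simp [coords, coords_length p]

lemma coords_inj : ∀ {x y : Fin n → Bool} (p q : (hypercube n).Walk x y),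
    coords p = coords q → p = q
  | _, _, .nil, .nil, _ => rfl
  | _, _, .nil, .cons _ _, hc => by simp [coords] at hc
  | _, _, .cons _ _, .nil, hc => by simp [coords] at hc
  | x, y, .cons (v := u) h p, .cons (v := u') h' q, hc => by
    simp only [coords, List.cons.injEq] at hc
    obtain ⟨h1, h2⟩ := hc
    have hu : u = u' := by rw [snd_eq h, snd_eq h', h1]
    subst hu
    rw [coords_inj p q h2]

lemma end_eq_iff : ∀ {x y : Fin n → Bool} (p : (hypercube n).Walk x y) (i : Fin n),
    (x i = y i ↔ Even ((coords p).count i))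
  | _, _, .nil, i => by simp [coords]
  | x, y, .cons (v := u) h p, i => by
    have hu : u = Function.update x (coordOf h) (!(x (coordOf h))) := snd_eq h
    have ih := end_eq_iff p i
    rcases eq_or_ne i (coordOf h) with hi | hi
    · have hui : u i = !(x i) := by rw [hu, hi]; simp
      have hcnt : (coordOf h :: coords p).count i = (coords p).count i + 1 := by
        rw [hi, List.count_cons_self]
      simp only [coords]
      rw [hcnt, Nat.even_add_one, ← ih, hui]
      cases x i <;> cases y i <;> simp
    · have hui : u i = x i := by rw [hu, Function.update_of_ne hi]
      rw [hui] at ih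
      simp only [coords]
      rw [List.count_cons_of_ne (Ne.symm hi), ih]

lemma finite_lists (m : ℕ) (P : List (Fin n) → Prop) :
    Finite {L : List (Fin n) // L.length = m ∧ P L} := by
  refine Finite.of_injective
    (fun L => (fun i : Fin m => L.1.get (Fin.cast L.2.1.symm i))) ?_
  intro L M h
  ext1
  refine List.ext_get (by rw [L.2.1, M.2.1]) fun k h1 h2 => ?_
  have := congrFun h ⟨k, by rw [← L.2.1]; exact h1⟩
  simpa using this

lemma insertIdx_indexOf_erase {α : Type*} [DecidableEq α] :
    ∀ (L : List α) (a : α), a ∈ L → (L.erase a).insertIdx (L.idxOf a) a = L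
  | b :: t, a, h => by
    rcases eq_or_ne b a with hb | hb
    · subst hb
      rw [List.erase_cons_head, List.idxOf_cons_self, List.insertIdx_zero]
    · have ha : a ∈ t := by
        rcases List.mem_cons.mp h with h' | h'
        · exact absurd h'.symm hb
        · exact h'
      rw [List.erase_cons_tail (by simpa using hb), List.idxOf_cons_ne _ hb]
      show (b :: (t.erase a)).insertIdx (t.idxOf a + 1) a = b :: t
      rw [List.insertIdx_succ_cons, insertIdx_indexOf_erase t a ha]

lemma dfact_step (l : ℕ) :
    Nat.doubleFactorial (2 * (l + 1) - 1) = (2 * l + 1) * Nat.doubleFactorial (2 * l - 1) := by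
  cases l with
  | zero => rfl
  | succ k =>
    have h1 : 2 * (k + 1 + 1) - 1 = (2 * k + 1) + 2 := by omega
    have h2 : 2 * (k + 1) - 1 = 2 * k + 1 := by omega
    rw [h1, h2, Nat.doubleFactorial_add_two]
    ring_nf

lemma ne_nil_of_len {l : ℕ} {L : List (Fin n)} (hlen : L.length = 2 * (l + 1)) :
    L ≠ [] := by
  rintro rfl; simp at hlen

lemma step_facts {l : ℕ} (L : List (Fin n)) (hlen : L.length = 2 * (l + 1))
    (hev : ∀ i, Even (L.count i)) :
    L.getLast (ne_nil_of_len hlen) ∈ L.dropLast ∧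
    L.dropLast.idxOf (L.getLast (ne_nil_of_len hlen)) < 2 * l + 1 ∧
    (L.dropLast.erase (L.getLast (ne_nil_of_len hlen))).length = 2 * l ∧
    (∀ i, Even ((L.dropLast.erase (L.getLast (ne_nil_of_len hlen))).count i)) := by
  set hne := ne_nil_of_len hlen
  set a := L.getLast hne with ha
  set L' := L.dropLast with hL'
  have hsplit : L' ++ [a] = L := List.dropLast_append_getLast hne
  have hlen' : L'.length = 2 * l + 1 := by
    have := congrArg List.length hsplit
    simp only [List.length_append, List.length_singleton] at this
    omega
  have hcount : ∀ b, L.count b = L'.count b + if b = a then 1 else 0 := by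
    intro b
    rw [← hsplit, List.count_append, List.count_singleton']
    rcases eq_or_ne b a with hb | hb
    · rw [if_pos hb, if_pos hb.symm]
    · rw [if_neg hb, if_neg hb.symm]
  have hmema : a ∈ L' := by
    have h1 := hev a
    rw [hcount a, if_pos rfl] at h1
    have h2 : L'.count a ≠ 0 := by
      intro h0; rw [h0] at h1; simpa using h1
    exact List.count_pos_iff.mp (Nat.pos_of_ne_zero h2)
  refine ⟨hmema, ?_, ?_, ?_⟩
  · rw [← hlen']; exact List.idxOf_lt_length_iff.mpr hmema
  · rw [List.length_erase_of_mem hmema, hlen']; omega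
  · intro b
    rcases eq_or_ne b a with hb | hb
    · rw [hb, List.count_erase_self]
      have h2 : L.count a = L'.count a + 1 := by rw [hcount a, if_pos rfl]
      have hevb := hev a
      rw [h2] at hevb
      rcases hevb with ⟨k, hk⟩
      have hcpos : 1 ≤ L'.count a := List.count_pos_iff.mpr hmema
      exact ⟨k - 1, by omega⟩
    · rw [List.count_erase_of_ne hb]
      have h2 : L.count b = L'.count b := by rw [hcount b, if_neg hb, Nat.add_zero]
      rw [← h2]; exact hev b

lemma card_even_lists (n : ℕ) : ∀ l : ℕ,
    Nat.card {L : List (Fin n) // L.length = 2 * l ∧ ∀ i, Even (L.count i)} ≤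
      Nat.doubleFactorial (2 * l - 1) * n ^ l
  | 0 => by
    have hsub : ∀ L : {L : List (Fin n) // L.length = 2 * 0 ∧ ∀ i, Even (L.count i)},
        L = ⟨[], by simp⟩ := by
      rintro ⟨L, hL, _⟩
      ext1
      exact List.length_eq_zero_iff.mp (by simpa using hL)
    calc Nat.card {L : List (Fin n) // L.length = 2 * 0 ∧ ∀ i, Even (L.count i)}
        ≤ Nat.card (Fin 1) := Nat.card_le_card_of_injective (fun _ => 0)
          (fun a b _ => by rw [hsub a, hsub b])
      _ = _ := by simp [Nat.doubleFactorial]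
  | l + 1 => by
    have hfin := finite_lists (n := n) (2 * l) (fun L => ∀ i, Even (L.count i))
    set S := {L : List (Fin n) // L.length = 2 * l ∧ ∀ i, Even (L.count i)} with hS
    set f : {L : List (Fin n) // L.length = 2 * (l + 1) ∧ ∀ i, Even (L.count i)} →
        Fin (2 * l + 1) × Fin n × S := fun L =>
      (⟨L.1.dropLast.idxOf (L.1.getLast (ne_nil_of_len L.2.1)),
          (step_facts L.1 L.2.1 L.2.2).2.1⟩,
        L.1.getLast (ne_nil_of_len L.2.1),
        ⟨L.1.dropLast.erase (L.1.getLast (ne_nil_of_len L.2.1)),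
          (step_facts L.1 L.2.1 L.2.2).2.2.1, (step_facts L.1 L.2.1 L.2.2).2.2.2⟩) with hf
    have recon : ∀ (L : {L : List (Fin n) // L.length = 2 * (l + 1) ∧ ∀ i, Even (L.count i)}),
        ((f L).2.2.1.insertIdx (f L).1.1 (f L).2.1) ++ [(f L).2.1] = L.1 := by
      intro L
      show ((L.1.dropLast.erase _).insertIdx _ _) ++ _ = L.1
      rw [insertIdx_indexOf_erase _ _ (step_facts L.1 L.2.1 L.2.2).1,
        List.dropLast_append_getLast]
    have hinj : Function.Injective f := by
      intro L M h
      ext1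
      rw [← recon L, ← recon M, h]
    calc Nat.card {L : List (Fin n) // L.length = 2 * (l + 1) ∧ ∀ i, Even (L.count i)}
        ≤ Nat.card (Fin (2 * l + 1) × Fin n × S) := Nat.card_le_card_of_injective f hinj
      _ = (2 * l + 1) * (n * Nat.card S) := by
          rw [Nat.card_prod, Nat.card_prod, Nat.card_eq_fintype_card (α := Fin (2 * l + 1)),
            Nat.card_eq_fintype_card (α := Fin n)]
          simp
      _ ≤ (2 * l + 1) * (n * (Nat.doubleFactorial (2 * l - 1) * n ^ l)) :=
          Nat.mul_le_mul_left _ (Nat.mul_le_mul_left _ (card_even_lists n l))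
      _ = Nat.doubleFactorial (2 * (l + 1) - 1) * n ^ (l + 1) := by
          rw [dfact_step]; ring

end Stmt8Aux

theorem stmt8 (n : ℕ) (v : Fin n → Bool) (l : ℕ) (hl : 2 ≤ l) :
    Nat.card {c : (hypercube n).Walk v v // c.IsCycle ∧ c.length = 2 * l} ≤
      Nat.doubleFactorial (2 * l - 1) * n ^ l := by
  have hfin := Stmt8Aux.finite_lists (n := n) (2 * l) (fun L => ∀ i, Even (L.count i))
  have hinj : Function.Injective
      (fun c : {c : (hypercube n).Walk v v // c.IsCycle ∧ c.length = 2 * l} =>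
        (⟨Stmt8Aux.coords c.1,
          by rw [Stmt8Aux.coords_length, c.2.2],
          fun i => (Stmt8Aux.end_eq_iff c.1 i).mp rfl⟩ :
          {L : List (Fin n) // L.length = 2 * l ∧ ∀ i, Even (L.count i)})) := by
    rintro ⟨p, hp⟩ ⟨q, hq⟩ h
    simp only [Subtype.mk.injEq] at h ⊢
    exact Stmt8Aux.coords_inj p q h
  calc Nat.card {c : (hypercube n).Walk v v // c.IsCycle ∧ c.length = 2 * l}
      ≤ Nat.card {L : List (Fin n) // L.length = 2 * l ∧ ∀ i, Even (L.count i)} :=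
        Nat.card_le_card_of_injective _ hinj
    _ ≤ _ := Stmt8Aux.card_even_lists n l
end
end

section
/- Let p = n^{-α} with α > 1/2. For every vertex v of H_n and every integer l ≥ 2, the probability that v lies on an open simple cycle of H_{n,p} of length 2l is at most (2l−1)!! · (n^{1−2α})^l, where (2l−1)!! = 1·3·5···(2l−1). -/
open MeasureTheory Filter ENNReal

noncomputable section

namespace PercAux


set_option linter.unusedSectionVars false

variable {β : Type*} [DecidableEq β] [Fintype β]

/-- Finset of lists of a given length over a fintype. -/
def listsLen (β : Type*) [DecidableEq β] [Fintype β] : ℕ → Finset (List β)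
  | 0 => {[]}
  | m + 1 => (Finset.univ ×ˢ listsLen β m).image fun p => p.1 :: p.2

lemma mem_listsLen {m : ℕ} {L : List β} : L ∈ listsLen β m ↔ L.length = m := by
  induction m generalizing L with
  | zero => cases L <;> simp [listsLen]
  | succ m ih =>
    cases L with
    | nil => simp [listsLen]
    | cons a M => simp [listsLen, ih]

/-- Lists of length `m` in which every letter occurs an even number of times. -/
def evenLists (β : Type*) [DecidableEq β] [Fintype β] (m : ℕ) : Finset (List β) :=
  (listsLen β m).filter fun L => ∀ x, Even (L.count x)

lemma mem_evenLists {m : ℕ} {L : List β} :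
    L ∈ evenLists β m ↔ L.length = m ∧ ∀ x, Even (L.count x) := by
  simp [evenLists, mem_listsLen]

lemma insertIdx_eraseIdx_self : ∀ (M : List β) (j : ℕ) (h : j < M.length),
    (M.eraseIdx j).insertIdx j M[j] = M
  | b :: t, 0, _ => rfl
  | b :: t, j + 1, h => by
    simpa using insertIdx_eraseIdx_self t j (by simpa using h)

lemma count_eraseIdx' (M : List β) (j : ℕ) (h : j < M.length) (x : β) :
    (M.eraseIdx j).count x = M.count x - if M[j] = x then 1 else 0 := by
  have hperm := (List.erase_getElem h).symm
  rw [hperm.count_eq, List.count_erase]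
  congr 1
  by_cases hx : M[j] = x <;> simp [hx, beq_iff_eq]

theorem card_evenLists_le (l : ℕ) :
    (evenLists β (2 * l)).card ≤ (2 * l - 1).doubleFactorial * (Fintype.card β) ^ l := by
  induction l with
  | zero =>
    have hsub : evenLists β 0 ⊆ {[]} := by
      intro L hL
      rw [mem_evenLists] at hL
      simp [List.length_eq_zero_iff.mp hL.1]
    simpa using Finset.card_le_card hsub
  | succ l ih =>
    by_cases hβ : Nonempty β
    · have hInh : Inhabited β := Classical.inhabited_of_nonempty hβ
      set T : Finset (β × ℕ × List β) :=
        Finset.univ ×ˢ Finset.range (2 * l + 1) ×ˢ evenLists β (2 * l) with hT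
      have key : (evenLists β (2 * (l + 1))).card ≤ T.card := by
        apply Finset.card_le_card_of_injOn
          (fun L => (L.headI, L.tail.idxOf L.headI, L.tail.eraseIdx (L.tail.idxOf L.headI)))
        · intro L hL
          rw [Finset.mem_coe, mem_evenLists] at hL
          obtain ⟨hlen, hcount⟩ := hL
          obtain ⟨a, M, rfl⟩ : ∃ a M, L = a :: M := by
            cases L with
            | nil =>
              rw [List.length_nil] at hlen; omega
            | cons a M => exact ⟨a, M, rfl⟩
          have hMlen : M.length = 2 * l + 1 := by
            rw [List.length_cons] at hlen; omega
          have hcnt : Even ((a :: M).count a) := hcount a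
          have h1 : 0 < (a :: M).count a := by
            rw [List.count_cons]; simp
          have hMa : 0 < M.count a := by
            rw [List.count_cons_self] at hcnt
            obtain ⟨r, hr⟩ := hcnt
            omega
          have haM : a ∈ M := List.count_pos_iff.mp hMa
          have hj : M.idxOf a < M.length := List.idxOf_lt_length_iff.mpr haM
          simp only [hT, Finset.mem_coe, List.headI_cons, List.tail_cons, Finset.mem_product,
            Finset.mem_univ, Finset.mem_range, true_and]
          refine ⟨by omega, ?_⟩
          rw [mem_evenLists]
          constructor
          · rw [List.length_eraseIdx, if_pos hj]; omega
          · intro x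
            rw [count_eraseIdx' M _ hj x, List.getElem_idxOf hj]
            have hcx := hcount x
            by_cases hxa : a = x
            · subst hxa
              rw [if_pos rfl]
              rw [List.count_cons_self] at hcx
              obtain ⟨r, hr⟩ := hcx
              exact ⟨r - 1, by omega⟩
            · rw [if_neg hxa, Nat.sub_zero]
              rwa [List.count_cons_of_ne hxa] at hcx
        · intro L1 h1 L2 h2 heq
          rw [Finset.mem_coe, mem_evenLists] at h1 h2
          obtain ⟨a1, M1, rfl⟩ : ∃ a M, L1 = a :: M := by
            cases L1 with
            | nil => exfalso; have h := h1.1; rw [List.length_nil] at h; omega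
            | cons a M => exact ⟨a, M, rfl⟩
          obtain ⟨a2, M2, rfl⟩ : ∃ a M, L2 = a :: M := by
            cases L2 with
            | nil => exfalso; have h := h2.1; rw [List.length_nil] at h; omega
            | cons a M => exact ⟨a, M, rfl⟩
          simp only [List.headI_cons, List.tail_cons, Prod.mk.injEq] at heq
          obtain ⟨ha, hj, hN⟩ := heq
          subst ha
          have hm1 : a1 ∈ M1 := by
            have hcnt := h1.2 a1
            rw [List.count_cons_self] at hcnt
            obtain ⟨r, hr⟩ := hcnt
            exact List.count_pos_iff.mp (by omega)
          have hm2 : a1 ∈ M2 := by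
            have hcnt := h2.2 a1
            rw [List.count_cons_self] at hcnt
            obtain ⟨r, hr⟩ := hcnt
            exact List.count_pos_iff.mp (by omega)
          have hj1 : M1.idxOf a1 < M1.length := List.idxOf_lt_length_iff.mpr hm1
          have hj2 : M2.idxOf a1 < M2.length := List.idxOf_lt_length_iff.mpr hm2
          have e1 : (M1.eraseIdx (M1.idxOf a1)).insertIdx (M1.idxOf a1) a1 = M1 := by
            have h := insertIdx_eraseIdx_self M1 (M1.idxOf a1) hj1
            rwa [List.getElem_idxOf hj1] at h
          have e2 : (M2.eraseIdx (M2.idxOf a1)).insertIdx (M2.idxOf a1) a1 = M2 := by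
            have h := insertIdx_eraseIdx_self M2 (M2.idxOf a1) hj2
            rwa [List.getElem_idxOf hj2] at h
          have h3 : (M1.eraseIdx (M1.idxOf a1)).insertIdx (M1.idxOf a1) a1
              = (M2.eraseIdx (M2.idxOf a1)).insertIdx (M2.idxOf a1) a1 := by
            rw [hN, hj]
          rw [e1, e2] at h3
          rw [h3]
      have hTcard : T.card = Fintype.card β * ((2 * l + 1) * (evenLists β (2 * l)).card) := by
        simp [hT]
      have hdf : (2 * (l + 1) - 1).doubleFactorial
          = (2 * l + 1) * (2 * l - 1).doubleFactorial := by
        cases l with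
        | zero => rfl
        | succ k =>
          have h1 : 2 * (k + 1 + 1) - 1 = (2 * (k + 1) - 1) + 2 := by omega
          have h2 : 2 * (k + 1) - 1 + 2 = 2 * (k + 1) + 1 := by omega
          rw [h1, Nat.doubleFactorial_add_two, h2]
      calc (evenLists β (2 * (l + 1))).card ≤ T.card := key
        _ = Fintype.card β * ((2 * l + 1) * (evenLists β (2 * l)).card) := hTcard
        _ ≤ Fintype.card β * ((2 * l + 1) * ((2 * l - 1).doubleFactorial * Fintype.card β ^ l)) :=
            by gcongr
        _ = (2 * (l + 1) - 1).doubleFactorial * Fintype.card β ^ (l + 1) := by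
            rw [hdf]; ring
    · have hempty : evenLists β (2 * (l + 1)) = ∅ := by
        rw [Finset.eq_empty_iff_forall_notMem]
        intro L hL
        rw [mem_evenLists] at hL
        cases L with
        | nil => have h := hL.1; rw [List.length_nil] at h; omega
        | cons a M => exact hβ ⟨a⟩
      simp [hempty]



variable {n : ℕ}

/-- The coordinate in which two adjacent hypercube vertices differ. -/
def hdir {x y : Fin n → Bool} (h : (hypercube n).Adj x y) : Fin n :=
  ({i | x i ≠ y i} : Finset (Fin n)).min' (by
    rw [← Finset.card_pos]
    have : hammingDist x y = 1 := h
    rw [hammingDist] at this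
    omega)

lemma hdir_spec {x y : Fin n → Bool} (h : (hypercube n).Adj x y) :
    x (hdir h) ≠ y (hdir h) ∧ ∀ j, j ≠ hdir h → x j = y j := by
  have hcard : ({i | x i ≠ y i} : Finset (Fin n)).card = 1 := h
  obtain ⟨i, hi⟩ := Finset.card_eq_one.mp hcard
  have hmem : hdir h ∈ ({i | x i ≠ y i} : Finset (Fin n)) := Finset.min'_mem _ _
  constructor
  · simpa using hmem
  · intro j hj
    by_contra hne
    have hjmem : j ∈ ({i | x i ≠ y i} : Finset (Fin n)) := by simpa using hne
    rw [hi] at hmem hjmem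
    simp only [Finset.mem_singleton] at hmem hjmem
    exact hj (hjmem.trans hmem.symm)

lemma eq_update_of_adj {x y : Fin n → Bool} (h : (hypercube n).Adj x y) :
    y = Function.update x (hdir h) (! x (hdir h)) := by
  obtain ⟨hne, huniq⟩ := hdir_spec h
  funext j
  by_cases hj : j = hdir h
  · subst hj
    rw [Function.update_self]
    rcases hx : x (hdir h) <;> rcases hy : y (hdir h) <;> simp_all
  · rw [Function.update_of_ne hj]
    exact (huniq j hj).symm

/-- The list of directions (flipped coordinates) of a hypercube walk. -/
def walkDirs {x y : Fin n → Bool} : (hypercube n).Walk x y → List (Fin n)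
  | .nil => []
  | .cons h p => hdir h :: walkDirs p

@[simp] lemma walkDirs_length {x y : Fin n → Bool} (p : (hypercube n).Walk x y) :
    (walkDirs p).length = p.length := by
  induction p with
  | nil => rfl
  | cons h p ih => simp [walkDirs, ih]

lemma walkDirs_parity {x y : Fin n → Bool} (p : (hypercube n).Walk x y) (i : Fin n) :
    (x i ≠ y i) ↔ Odd ((walkDirs p).count i) := by
  induction p with
  | nil => simp [walkDirs]
  | @cons x z y h p ih =>
    rw [walkDirs, List.count_cons]
    by_cases hi : hdir h = i
    · subst hi
      have hx : z (hdir h) = ! x (hdir h) := by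
        have h2 := congrFun (eq_update_of_adj h) (hdir h)
        rwa [Function.update_self] at h2
      simp only [beq_self_eq_true, if_true]
      rw [Nat.odd_add_one, ← ih, hx]
      cases x (hdir h) <;> cases y (hdir h) <;> simp
    · have hx : x i = z i := (hdir_spec h).2 i (fun hh => hi hh.symm)
      have hb : (hdir h == i) = false := by simpa using hi
      rw [hb]
      simp only [Bool.false_eq_true, if_false]
      rw [Nat.add_zero, ← ih, hx]

lemma walkDirs_injective {x y : Fin n → Bool} :
    ∀ (p q : (hypercube n).Walk x y), walkDirs p = walkDirs q → p = q := by
  intro p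
  induction p with
  | nil => intro q h; cases q with
    | nil => rfl
    | cons h' q' => simp [walkDirs] at h
  | @cons x z y hadj p ih =>
    intro q h
    cases q with
    | nil => simp [walkDirs] at h
    | @cons _ z' _ hadj' q' =>
      rw [walkDirs, walkDirs, List.cons.injEq] at h
      obtain ⟨hd, ht⟩ := h
      have hz : z = z' := by
        rw [eq_update_of_adj hadj, eq_update_of_adj hadj', hd]
      subst hz
      rw [ih q' ht]



instance (n : ℕ) : DecidableRel (hypercube n).Adj := fun x y =>
  (inferInstance : Decidable (hammingDist x y = 1))

instance (p : ℝ) : IsProbabilityMeasure (bernoulliBool p) :=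
  PMF.toMeasure.isProbabilityMeasure _

lemma bernoulliBool_true (p : ℝ) :
    bernoulliBool p {true} = min (ENNReal.ofReal p) 1 := by
  rw [bernoulliBool, PMF.toMeasure_apply_singleton _ _ (measurableSet_singleton _),
    PMF.bernoulli_apply]
  rfl

lemma percGraph_le {V : Type*} (G : SimpleGraph V) (ω : Sym2 V → Bool) :
    percGraph G ω ≤ G := by intro x y h; exact h.1

lemma measure_allOpen (n : ℕ) (p : ℝ) (s : Finset (Sym2 (Fin n → Bool))) :
    percMeasure n p {ω | ∀ e ∈ s, ω e = true}
      = (min (ENNReal.ofReal p) 1) ^ s.card := by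
  classical
  have hset : {ω : Sym2 (Fin n → Bool) → Bool | ∀ e ∈ s, ω e = true}
      = Set.pi Set.univ fun e => if e ∈ s then ({true} : Set Bool) else Set.univ := by
    ext ω
    simp only [Set.mem_setOf_eq, Set.mem_univ_pi]
    constructor
    · intro h e
      by_cases he : e ∈ s <;> simp [he, h e]
    · intro h e he
      have := h e
      rw [if_pos he] at this
      simpa using this
  rw [hset, percMeasure, Measure.pi_pi]
  have : ∀ e : Sym2 (Fin n → Bool),
      bernoulliBool p (if e ∈ s then ({true} : Set Bool) else Set.univ)
        = if e ∈ s then min (ENNReal.ofReal p) 1 else 1 := by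
    intro e
    by_cases he : e ∈ s
    · rw [if_pos he, if_pos he, bernoulliBool_true]
    · rw [if_neg he, if_neg he]; exact measure_univ
  rw [Finset.prod_congr rfl fun e _ => this e, Finset.prod_ite_mem, Finset.univ_inter,
    Finset.prod_const]

end PercAux

theorem stmt9 (α : ℝ) (hα : 1 / 2 < α) (n : ℕ) (v : Fin n → Bool) (l : ℕ) (hl : 2 ≤ l) :
    percMeasure n ((n : ℝ) ^ (-α))
      {ω | ∃ c : (percGraph (hypercube n) ω).Walk v v, c.IsCycle ∧ c.length = 2 * l} ≤
    (Nat.doubleFactorial (2 * l - 1) : ℝ≥0∞) *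
      ENNReal.ofReal ((n : ℝ) ^ (1 - 2 * α)) ^ l := by
  classical
  set q : ℝ≥0∞ := min (ENNReal.ofReal ((n : ℝ) ^ (-α))) 1 with hq_def
  set C : Finset ((hypercube n).Walk v v) :=
    ((hypercube n).finsetWalkLength (2 * l) v v).filter (fun c => c.IsCycle) with hC
  -- Step 1: the event is contained in the union over combinatorial cycles
  have hsub : {ω | ∃ c : (percGraph (hypercube n) ω).Walk v v, c.IsCycle ∧ c.length = 2 * l}
      ⊆ ⋃ c ∈ C, {ω | ∀ e ∈ c.edges, ω e = true} := by
    rintro ω ⟨c', hcyc, hlen⟩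
    have hle := PercAux.percGraph_le (hypercube n) ω
    refine Set.mem_biUnion (show c'.mapLe hle ∈ C from ?_) ?_
    · rw [hC, Finset.mem_filter, SimpleGraph.mem_finsetWalkLength_iff]
      refine ⟨?_, hcyc.mapLe _⟩
      rw [SimpleGraph.Walk.mapLe, SimpleGraph.Walk.length_map]
      exact hlen
    · intro e he
      rw [SimpleGraph.Walk.mapLe, SimpleGraph.Walk.edges_map] at he
      obtain ⟨e', he', rfl⟩ := List.mem_map.mp he
      have hE := c'.edges_subset_edgeSet he'
      have hid : Sym2.map (⇑(SimpleGraph.Hom.ofLE hle)) e' = e' := by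
        induction e' using Sym2.ind with
        | _ a b => rfl
      show ω (Sym2.map (⇑(SimpleGraph.Hom.ofLE hle)) e') = true
      rw [hid]
      induction e' using Sym2.ind with
      | _ a b =>
        rw [SimpleGraph.mem_edgeSet] at hE
        exact hE.2
  -- Step 2: union bound and exact cylinder probabilities
  have hstep2 : percMeasure n ((n : ℝ) ^ (-α))
      {ω | ∃ c : (percGraph (hypercube n) ω).Walk v v, c.IsCycle ∧ c.length = 2 * l}
      ≤ (C.card : ℝ≥0∞) * q ^ (2 * l) := by
    refine le_trans (measure_mono hsub) ?_
    calc percMeasure n ((n : ℝ) ^ (-α)) (⋃ c ∈ C, {ω | ∀ e ∈ c.edges, ω e = true})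
        ≤ ∑ c ∈ C, percMeasure n ((n : ℝ) ^ (-α)) {ω | ∀ e ∈ c.edges, ω e = true} :=
          measure_biUnion_finset_le _ _
      _ = ∑ c ∈ C, q ^ (2 * l) := by
          apply Finset.sum_congr rfl
          intro c hc
          rw [hC, Finset.mem_filter, SimpleGraph.mem_finsetWalkLength_iff] at hc
          have hset : {ω : Sym2 (Fin n → Bool) → Bool | ∀ e ∈ c.edges, ω e = true}
              = {ω | ∀ e ∈ c.edges.toFinset, ω e = true} := by
            ext ω; simp
          have hcard : c.edges.toFinset.card = 2 * l := by
            rw [List.toFinset_card_of_nodup hc.2.edges_nodup,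
              SimpleGraph.Walk.length_edges, hc.1]
          rw [hset, PercAux.measure_allOpen, hcard]
      _ = (C.card : ℝ≥0∞) * q ^ (2 * l) := by
          rw [Finset.sum_const, nsmul_eq_mul]
  -- Step 3: counting
  have hcount : C.card ≤ (2 * l - 1).doubleFactorial * n ^ l := by
    have h1 : C.card ≤ (PercAux.evenLists (Fin n) (2 * l)).card := by
      apply Finset.card_le_card_of_injOn PercAux.walkDirs
      · intro c hc
        rw [Finset.mem_coe, hC, Finset.mem_filter, SimpleGraph.mem_finsetWalkLength_iff] at hc
        rw [Finset.mem_coe, PercAux.mem_evenLists]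
        refine ⟨by rw [PercAux.walkDirs_length]; exact hc.1, fun i => ?_⟩
        have hpar := PercAux.walkDirs_parity c i
        have hne : ¬ (v i ≠ v i) := by simp
        exact Nat.not_odd_iff_even.mp (fun ho => hne (hpar.mpr ho))
      · intro c1 _ c2 _ h
        exact PercAux.walkDirs_injective c1 c2 h
    calc C.card ≤ (PercAux.evenLists (Fin n) (2 * l)).card := h1
      _ ≤ (2 * l - 1).doubleFactorial * (Fintype.card (Fin n)) ^ l :=
          PercAux.card_evenLists_le l
      _ = (2 * l - 1).doubleFactorial * n ^ l := by rw [Fintype.card_fin]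
  -- Step 4: arithmetic
  have hq2 : (n : ℝ≥0∞) * q ^ 2 ≤ ENNReal.ofReal ((n : ℝ) ^ (1 - 2 * α)) := by
    rcases Nat.eq_zero_or_pos n with hn | hn
    · subst hn
      rw [Nat.cast_zero, zero_mul]
      exact zero_le
    · have hnpos : (0 : ℝ) < n := Nat.cast_pos.mpr hn
      have hqle : q ≤ ENNReal.ofReal ((n : ℝ) ^ (-α)) := min_le_left _ _
      have h2 : q ^ 2 ≤ ENNReal.ofReal ((n : ℝ) ^ (-α)) ^ 2 :=
        pow_le_pow_left₀ zero_le hqle 2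
      have h3 : ENNReal.ofReal ((n : ℝ) ^ (-α)) ^ 2
          = ENNReal.ofReal ((n : ℝ) ^ (-α) * (n : ℝ) ^ (-α)) := by
        rw [sq, ← ENNReal.ofReal_mul (Real.rpow_nonneg hnpos.le _)]
      have h4 : (n : ℝ) * ((n : ℝ) ^ (-α) * (n : ℝ) ^ (-α)) = (n : ℝ) ^ (1 - 2 * α) := by
        rw [← Real.rpow_add hnpos]
        nth_rewrite 1 [← Real.rpow_one (n : ℝ)]
        rw [← Real.rpow_add hnpos]
        ring_nf
      calc (n : ℝ≥0∞) * q ^ 2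
          ≤ (n : ℝ≥0∞) * ENNReal.ofReal ((n : ℝ) ^ (-α) * (n : ℝ) ^ (-α)) := by
            rw [← h3]; exact mul_le_mul_right h2 _
        _ = ENNReal.ofReal ((n : ℝ)) * ENNReal.ofReal ((n : ℝ) ^ (-α) * (n : ℝ) ^ (-α)) := by
            rw [ENNReal.ofReal_natCast]
        _ = ENNReal.ofReal ((n : ℝ) * ((n : ℝ) ^ (-α) * (n : ℝ) ^ (-α))) := by
            rw [← ENNReal.ofReal_mul hnpos.le]
        _ = ENNReal.ofReal ((n : ℝ) ^ (1 - 2 * α)) := by rw [h4]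
  refine le_trans hstep2 ?_
  calc (C.card : ℝ≥0∞) * q ^ (2 * l)
      ≤ (((2 * l - 1).doubleFactorial * n ^ l : ℕ) : ℝ≥0∞) * q ^ (2 * l) :=
        mul_le_mul_left (Nat.cast_le.mpr hcount) _
    _ = ((2 * l - 1).doubleFactorial : ℝ≥0∞) * (((n : ℝ≥0∞) * q ^ 2) ^ l) := by
        rw [Nat.cast_mul, Nat.cast_pow]; ring
    _ ≤ ((2 * l - 1).doubleFactorial : ℝ≥0∞) * ENNReal.ofReal ((n : ℝ) ^ (1 - 2 * α)) ^ l :=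
        mul_le_mul_right (pow_le_pow_left₀ zero_le hq2 l) _
end
end

section
/- Let Y be any metric space and let f : H_n → Y be a map with distortion D(f) ≤ D for some real D ≥ 1. Then the image of f has cardinality at least 2^n / (n+1)^{⌊D⌋}; in particular, if D ≤ n^β then |f(H_n)| ≥ 2^n · (n+1)^{−n^β}. -/
open ENNReal

noncomputable section

/-- `D₊(f)` for a map between spaces with given distances. -/
def dPlus {X Y : Type*} (dX : X → X → ℝ≥0∞) (dY : Y → Y → ℝ≥0∞) (f : X → Y) : ℝ≥0∞ :=
  max 1 (⨆ (a : X) (b : X) (_ : a ≠ b), dY (f a) (f b) / dX a b)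

/-- `D₋(f)` for a map between spaces with given distances. -/
def dMinus {X Y : Type*} (dX : X → X → ℝ≥0∞) (dY : Y → Y → ℝ≥0∞) (f : X → Y) : ℝ≥0∞ :=
  ⨅ (a : X) (b : X) (_ : a ≠ b), max 1 (dY (f a) (f b)) / dX a b

/-- The distortion `D(f) = D₊(f)/D₋(f)`. -/
def distortionOf {X Y : Type*} (dX : X → X → ℝ≥0∞) (dY : Y → Y → ℝ≥0∞) (f : X → Y) : ℝ≥0∞ :=
  dPlus dX dY f / dMinus dX dY f


lemma walk_ge {n : ℕ} {x y : Fin n → Bool} (p : (hypercube n).Walk x y) :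
    hammingDist x y ≤ p.length := by
  induction p with
  | nil => simp [hammingDist_self]
  | cons h q ih =>
    rename_i a b c
    calc hammingDist a c ≤ hammingDist a b + hammingDist b c := hammingDist_triangle _ _ _
    _ ≤ 1 + q.length := by have hab : hammingDist a b = 1 := h; omega
    _ = _ := by simp [SimpleGraph.Walk.length_cons]; omega

lemma edist_le_hamming {n : ℕ} : ∀ (d : ℕ) (x y : Fin n → Bool), hammingDist x y = d →
    (hypercube n).edist x y ≤ d := by
  intro d
  induction d with
  | zero => intro x y h; rw [hammingDist_eq_zero] at h; simp [h, SimpleGraph.edist_self]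
  | succ d ih =>
    intro x y h
    have hne : x ≠ y := by
      intro e; rw [e, hammingDist_self] at h; omega
    obtain ⟨i, hi⟩ : ∃ i, x i ≠ y i := by
      by_contra hc; push_neg at hc; exact hne (funext hc)
    set x' := Function.update x i (y i) with hx'
    have hfil : ({j | x' j ≠ y j} : Finset (Fin n)) = ({j | x j ≠ y j} : Finset (Fin n)).erase i := by
      ext j
      rcases eq_or_ne j i with rfl | hji
      · simp [hx', Function.update_self]
      · simp [hx', Function.update_of_ne hji, hji]
    have h1 : hammingDist x' y = d := by
      have : hammingDist x y = (({j | x j ≠ y j} : Finset (Fin n))).card := rfl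
      have hcard : hammingDist x' y = (({j | x j ≠ y j} : Finset (Fin n)).erase i).card := by
        rw [← hfil]; rfl
      rw [hcard, Finset.card_erase_of_mem (by simp [hi])]
      rw [this] at h; omega
    have hadj : (hypercube n).Adj x x' := by
      show hammingDist x x' = 1
      have : ({j | x j ≠ x' j} : Finset (Fin n)) = {i} := by
        ext j
        rcases eq_or_ne j i with rfl | hji
        · simp [hx', Function.update_self, hi]
        · simp [hx', Function.update_of_ne hji, hji]
      show (({j | x j ≠ x' j} : Finset (Fin n))).card = 1
      rw [this]; simp
    calc (hypercube n).edist x y ≤ (hypercube n).edist x x' + (hypercube n).edist x' y :=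
          SimpleGraph.edist_triangle
    _ ≤ 1 + d := add_le_add (le_of_eq (SimpleGraph.edist_eq_one_iff_adj.2 hadj)) (ih x' y h1)
    _ = (d + 1 : ℕ) := by push_cast; ring

lemma hyper_edist {n : ℕ} (x y : Fin n → Bool) :
    (hypercube n).edist x y = hammingDist x y := by
  refine le_antisymm (edist_le_hamming _ x y rfl) ?_
  have hne : (hypercube n).edist x y ≠ ⊤ :=
    ne_top_of_le_ne_top (by simp) (edist_le_hamming _ x y rfl)
  obtain ⟨p, hp⟩ := SimpleGraph.exists_walk_of_edist_ne_top hne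
  rw [← hp]
  exact_mod_cast walk_ge p

lemma separation {Y : Type*} [MetricSpace Y] {n : ℕ} {f : (Fin n → Bool) → Y} {D : ℝ}
    (hD : 1 ≤ D) (hf : distortionOf (gdist (hypercube n)) edist f ≤ ENNReal.ofReal D)
    {a b : Fin n → Bool} (hab : f a = f b) : hammingDist a b ≤ Nat.floor D := by
  rcases eq_or_ne a b with rfl | hne
  · simp [hammingDist_self]
  set d := hammingDist a b with hd
  have hdpos : 0 < d := hammingDist_pos.2 hne
  have hgd : gdist (hypercube n) a b = (d : ℝ≥0∞) := by
    rw [gdist, hyper_edist]; exact_mod_cast rfl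
  have hmin : dMinus (gdist (hypercube n)) edist f ≤ 1 / (d : ℝ≥0∞) := by
    calc dMinus (gdist (hypercube n)) edist f
        ≤ max 1 (edist (f a) (f b)) / gdist (hypercube n) a b := by
          exact iInf_le_of_le a (iInf_le_of_le b (iInf_le_of_le hne le_rfl))
    _ = 1 / (d : ℝ≥0∞) := by rw [hab, hgd]; simp
  have hplus : (1 : ℝ≥0∞) ≤ dPlus (gdist (hypercube n)) edist f := le_max_left _ _
  have key : (d : ℝ≥0∞) ≤ ENNReal.ofReal D := by
    calc (d : ℝ≥0∞) = 1 / (1 / (d : ℝ≥0∞)) := by simp [one_div]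
    _ ≤ dPlus (gdist (hypercube n)) edist f / dMinus (gdist (hypercube n)) edist f :=
        ENNReal.div_le_div hplus hmin
    _ ≤ ENNReal.ofReal D := hf
  have : (d : ℝ) ≤ D := (ENNReal.natCast_le_ofReal (by omega)).1 key
  exact Nat.le_floor this

-- sum of binomials bound
lemma sum_choose_le (n r : ℕ) : ∑ i ∈ Finset.range (r + 1), n.choose i ≤ (n + 1) ^ r := by
  induction r with
  | zero => simp
  | succ r ih =>
    rw [Finset.sum_range_succ]
    have h1 : n.choose (r + 1) ≤ n ^ (r + 1) := Nat.choose_le_pow n (r + 1)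
    have h2 : n ^ (r + 1) ≤ n * (n + 1) ^ r := by
      rw [pow_succ']
      exact Nat.mul_le_mul_left n (Nat.pow_le_pow_left (by omega) r)
    calc ∑ i ∈ Finset.range (r + 1), n.choose i + n.choose (r + 1)
        ≤ (n + 1) ^ r + n * (n + 1) ^ r := Nat.add_le_add ih (h1.trans h2)
    _ = (n + 1) ^ (r + 1) := by ring

-- ball bound
lemma ball_card_le (n r : ℕ) (x₀ : Fin n → Bool) :
    (Finset.univ.filter fun y => hammingDist x₀ y ≤ r).card ≤ (n + 1) ^ r := by
  have hinj : Set.InjOn (fun y : Fin n → Bool => ({i | x₀ i ≠ y i} : Finset (Fin n)))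
      ↑(Finset.univ.filter fun y => hammingDist x₀ y ≤ r) := by
    intro y _ z _ h
    funext i
    have hy : (x₀ i ≠ y i) = (x₀ i ≠ z i) := by
      have := Finset.ext_iff.1 h i
      simpa using by
        constructor <;> intro hh <;> [exact (by simpa using (Finset.mem_filter.1 ((Finset.ext_iff.1 h i).1 (by simp [hh]))).2); exact (by simpa using (Finset.mem_filter.1 ((Finset.ext_iff.1 h i).2 (by simp [hh]))).2)]
    revert hy
    rcases x₀ i <;> rcases y i <;> rcases z i <;> simp
  have hmaps : ∀ y ∈ (Finset.univ.filter fun y => hammingDist x₀ y ≤ r),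
      ({i | x₀ i ≠ y i} : Finset (Fin n)) ∈
      (Finset.univ.powerset.filter fun S : Finset (Fin n) => S.card ≤ r) := by
    intro y hy
    simp only [Finset.mem_filter, Finset.mem_powerset] at *
    exact ⟨Finset.subset_univ _, hy.2⟩
  have := Finset.card_le_card_of_injOn _ hmaps hinj
  refine this.trans ?_
  have heq : (Finset.univ.powerset.filter fun S : Finset (Fin n) => S.card ≤ r)
      = (Finset.range (r + 1)).biUnion (fun k => Finset.powersetCard k Finset.univ) := by
    ext S
    simp [Finset.mem_powersetCard, Finset.mem_biUnion, Nat.lt_succ_iff]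
  rw [heq]
  calc ((Finset.range (r + 1)).biUnion fun k => Finset.powersetCard k Finset.univ).card
      ≤ ∑ k ∈ Finset.range (r + 1), (Finset.powersetCard k (Finset.univ : Finset (Fin n))).card :=
        Finset.card_biUnion_le
  _ = ∑ k ∈ Finset.range (r + 1), n.choose k := by
      simp [Finset.card_powersetCard]
  _ ≤ (n + 1) ^ r := sum_choose_le n r

lemma count_bound {Y : Type*} [MetricSpace Y] {n : ℕ} {f : (Fin n → Bool) → Y} {D : ℝ}
    (hD : 1 ≤ D) (hf : distortionOf (gdist (hypercube n)) edist f ≤ ENNReal.ofReal D) :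
    2 ^ n ≤ Nat.card (Set.range f) * (n + 1) ^ (Nat.floor D) := by
  classical
  set r := Nat.floor D
  set T := Finset.univ.image f with hT
  have hcard : Nat.card (Set.range f) = T.card := by
    have : Set.range f = ↑T := by ext y; simp [hT]
    rw [this, Nat.card_coe_set_eq, Set.ncard_coe_finset]
  have hsum : (Finset.univ : Finset (Fin n → Bool)).card
      = ∑ y ∈ T, (Finset.univ.filter fun x => f x = y).card :=
    Finset.card_eq_sum_card_fiberwise (fun x _ => Finset.mem_image_of_mem f (Finset.mem_univ x))
  have hfib : ∀ y ∈ T, (Finset.univ.filter fun x => f x = y).card ≤ (n + 1) ^ r := by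
    intro y hy
    obtain ⟨x₀, -, hx₀⟩ := Finset.mem_image.1 hy
    have hsub : (Finset.univ.filter fun x => f x = y)
        ⊆ (Finset.univ.filter fun x => hammingDist x₀ x ≤ r) := by
      intro x hx
      simp only [Finset.mem_filter, Finset.mem_univ, true_and] at *
      exact separation hD hf (by rw [hx₀, hx])
    exact (Finset.card_le_card hsub).trans (ball_card_le n r x₀)
  have : (Finset.univ : Finset (Fin n → Bool)).card ≤ T.card * (n + 1) ^ r := by
    rw [hsum]
    calc ∑ y ∈ T, (Finset.univ.filter fun x => f x = y).card
        ≤ ∑ _y ∈ T, (n + 1) ^ r := Finset.sum_le_sum hfib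
    _ = T.card * (n + 1) ^ r := by rw [Finset.sum_const, smul_eq_mul]
  have huniv : (Finset.univ : Finset (Fin n → Bool)).card = 2 ^ n := by
    simp [Finset.card_univ]
  rw [hcard]
  omega

theorem stmt12 {Y : Type*} [MetricSpace Y] (n : ℕ) (f : (Fin n → Bool) → Y) (D : ℝ)
    (hD : 1 ≤ D) (hf : distortionOf (gdist (hypercube n)) edist f ≤ ENNReal.ofReal D) :
    (2 : ℝ) ^ n / ((n : ℝ) + 1) ^ (Nat.floor D) ≤ (Nat.card (Set.range f) : ℝ) ∧
    ∀ β : ℝ, D ≤ (n : ℝ) ^ β →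
      (2 : ℝ) ^ n * ((n : ℝ) + 1) ^ (-((n : ℝ) ^ β)) ≤ (Nat.card (Set.range f) : ℝ) := by
  have hnat := count_bound hD hf
  set r := Nat.floor D
  set N := Nat.card (Set.range f)
  have hpow : (0 : ℝ) < ((n : ℝ) + 1) ^ r := by positivity
  have hreal : (2 : ℝ) ^ n ≤ (N : ℝ) * ((n : ℝ) + 1) ^ r := by exact_mod_cast hnat
  have hmain : (2 : ℝ) ^ n / ((n : ℝ) + 1) ^ r ≤ (N : ℝ) := (div_le_iff₀ hpow).2 hreal
  refine ⟨hmain, fun β hβ => ?_⟩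
  have h1 : (1 : ℝ) ≤ (n : ℝ) + 1 := by have : (0:ℝ) ≤ n := Nat.cast_nonneg n; linarith
  have hrD : (r : ℝ) ≤ D := Nat.floor_le (by linarith)
  have hexp : -((n : ℝ) ^ β) ≤ -(r : ℝ) := by linarith
  have : ((n : ℝ) + 1) ^ (-((n : ℝ) ^ β)) ≤ ((n : ℝ) + 1) ^ (-(r : ℝ)) :=
    Real.rpow_le_rpow_of_exponent_le h1 hexp
  have heq : ((n : ℝ) + 1) ^ (-(r : ℝ)) = (((n : ℝ) + 1) ^ r)⁻¹ := by
    rw [Real.rpow_neg (by positivity), Real.rpow_natCast]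
  calc (2 : ℝ) ^ n * ((n : ℝ) + 1) ^ (-((n : ℝ) ^ β))
      ≤ (2 : ℝ) ^ n * ((n : ℝ) + 1) ^ (-(r : ℝ)) := by
        apply mul_le_mul_of_nonneg_left this (by positivity)
  _ = (2 : ℝ) ^ n / ((n : ℝ) + 1) ^ r := by rw [heq, div_eq_mul_inv]
  _ ≤ (N : ℝ) := hmain
end
end
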